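/- arXiv:2011.06640 — 13 statements merged into one kernel-verified Lean document; each statement's English description precedes it below -/
import Mathlib

section
/- Let a > b > 0 with a² > 2b², c² = a² − b², and |u| ≤ (a/c²)·√(a² − 2b²). Define the four points P₁ = (a·u, b·√(1−u²)), P₃ = (−a·u, b·√(1−u²)), P₂ = (−(a/(c²√(1−u²)))·√(a²(a²−2b²) − c⁴u²), −b³/(c²√(1−u²))), P₄ = ((a/(c²√(1−u²)))·√(a²(a²−2b²) − c⁴u²), −b³/(c²√(1−u²))). Then the perimeter |P₁P₂| + |P₂P₃| + |P₃P₄| + |P₄P₁| equals 4a²/c, independent of u. -/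
/-!
By the reflection `x ↦ -x`, which swaps `P₁ ↔ P₃` and `P₂ ↔ P₄`, the four sides take only two
lengths, `|P₁P₂| = |P₃P₄|` and `|P₂P₃| = |P₄P₁|`, the second being the first with `u` replaced by
`-u`. With `s = √(1 - u²)` and `w = √(a²(a² - 2b²) - c⁴u²)` the squared length of `P₁P₂` is the
perfect square `((a²s + uw)/(cs))²`, so the perimeter is
`2(a²s + uw)/(cs) + 2(a²s - uw)/(cs) = 4a²/c`.
-/

/-- Euclidean distance between two points of the plane `ℝ × ℝ`. -/
noncomputable def edist' (p q : ℝ × ℝ) : ℝ :=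
  Real.sqrt ((p.1 - q.1)^2 + (p.2 - q.2)^2)

lemma edist'_comm (p q : ℝ × ℝ) : edist' p q = edist' q p := by
  unfold edist'
  ring_nf

lemma edist'_neg_fst (x y x' y' : ℝ) : edist' (-x, y) (-x', y') = edist' (x, y) (x', y') := by
  unfold edist'
  ring_nf

lemma sq_le_of_abs_le_mul_sqrt {u k t : ℝ} (ht : 0 ≤ t) (hu : |u| ≤ k * √t) :
    u ^ 2 ≤ k ^ 2 * t := by
  calc u ^ 2 = |u| ^ 2 := (sq_abs u).symm
    _ ≤ (k * √t) ^ 2 := pow_le_pow_left₀ (abs_nonneg u) hu 2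
    _ = k ^ 2 * t := by rw [mul_pow, Real.sq_sqrt ht]

section Chord

variable {a b c u s w : ℝ}

lemma chord_sq_eq (hc : c ≠ 0) (hs : s ≠ 0) (hc2 : c ^ 2 = a ^ 2 - b ^ 2)
    (hs2 : s ^ 2 = 1 - u ^ 2) (hw2 : w ^ 2 = a ^ 2 * (a ^ 2 - 2 * b ^ 2) - c ^ 4 * u ^ 2) :
    (a * u + a / (c ^ 2 * s) * w) ^ 2 + (b * s + b ^ 3 / (c ^ 2 * s)) ^ 2
      = ((a ^ 2 * s + u * w) / (c * s)) ^ 2 := by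
  have hb2 : b ^ 2 + c ^ 2 * s ^ 2 = a ^ 2 - c ^ 2 * u ^ 2 := by
    linear_combination c ^ 2 * hs2 + hc2
  have key : a ^ 2 * (c ^ 2 * u * s + w) ^ 2 + b ^ 2 * (a ^ 2 - c ^ 2 * u ^ 2) ^ 2
      = c ^ 2 * (a ^ 2 * s + u * w) ^ 2 := by
    linear_combination (a ^ 2 - c ^ 2 * u ^ 2) * hw2
      + a ^ 2 * c ^ 2 * (c ^ 2 * u ^ 2 - a ^ 2) * hs2 + (u ^ 4 * c ^ 4 - a ^ 4) * hc2
  field_simp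
  linear_combination key + b ^ 2 * ((b ^ 2 + c ^ 2 * s ^ 2) + (a ^ 2 - c ^ 2 * u ^ 2)) * hb2

/-- Because `(a²s)² - (uw)² = (a² - c²u²)²`. -/
lemma chord_abs_mul_le (ha : a ≠ 0) (hs : 0 < s) (hc2 : c ^ 2 = a ^ 2 - b ^ 2)
    (hs2 : s ^ 2 = 1 - u ^ 2) (hw2 : w ^ 2 = a ^ 2 * (a ^ 2 - 2 * b ^ 2) - c ^ 4 * u ^ 2) :
    |u * w| ≤ a ^ 2 * s := by
  have hdiff : (a ^ 2 * s) ^ 2 - (u * w) ^ 2 = (a ^ 2 - c ^ 2 * u ^ 2) ^ 2 := by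
    linear_combination a ^ 4 * hs2 - u ^ 2 * hw2 + 2 * a ^ 2 * u ^ 2 * hc2
  apply abs_le_of_sq_le_sq _ (by positivity)
  nlinarith [sq_nonneg (a ^ 2 - c ^ 2 * u ^ 2)]

lemma edist'_chord (ha : a ≠ 0) (hc : 0 < c) (hs : 0 < s) (hc2 : c ^ 2 = a ^ 2 - b ^ 2)
    (hs2 : s ^ 2 = 1 - u ^ 2) (hw2 : w ^ 2 = a ^ 2 * (a ^ 2 - 2 * b ^ 2) - c ^ 4 * u ^ 2) :
    edist' (a * u, b * s) (-(a / (c ^ 2 * s) * w), -(b ^ 3 / (c ^ 2 * s)))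
      = (a ^ 2 * s + u * w) / (c * s) := by
  have hnn : 0 ≤ (a ^ 2 * s + u * w) / (c * s) := by
    have := chord_abs_mul_le ha hs hc2 hs2 hw2
    have := neg_abs_le (u * w)
    exact div_nonneg (by linarith) (by positivity)
  unfold edist'
  simp only [sub_neg_eq_add]
  rw [chord_sq_eq hc.ne' hs.ne' hc2 hs2 hw2, Real.sqrt_sq hnn]

end Chord

theorem perimeter_self_intersected_4periodic_general
    (a b c u : ℝ) (hb : b > 0) (h2 : a^2 > 2*b^2)
    (hc : c > 0) (hc2 : c^2 = a^2 - b^2)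
    (hu : |u| ≤ (a / c^2) * Real.sqrt (a^2 - 2*b^2)) :
    let s := Real.sqrt (1 - u^2)
    let w := Real.sqrt (a^2*(a^2 - 2*b^2) - c^4*u^2)
    let P1 : ℝ × ℝ := (a*u, b*s)
    let P3 : ℝ × ℝ := (-(a*u), b*s)
    let P2 : ℝ × ℝ := (-((a/(c^2*s))*w), -(b^3/(c^2*s)))
    let P4 : ℝ × ℝ := ((a/(c^2*s))*w, -(b^3/(c^2*s)))
    edist' P1 P2 + edist' P2 P3 + edist' P3 P4 + edist' P4 P1 = 4*a^2/c := by
  intro s w P1 P3 P2 P4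
  have ha : a ≠ 0 := by rintro rfl; nlinarith
  have hu2 : c ^ 4 * u ^ 2 ≤ a ^ 2 * (a ^ 2 - 2 * b ^ 2) := by
    have := sq_le_of_abs_le_mul_sqrt (by linarith) hu
    rw [div_pow, div_mul_eq_mul_div, le_div_iff₀ (by positivity)] at this
    linarith
  have hu1 : u ^ 2 < 1 := by
    have : a ^ 2 * (a ^ 2 - 2 * b ^ 2) = c ^ 4 - b ^ 4 := by
      linear_combination -(c ^ 2 + a ^ 2 - b ^ 2) * hc2
    nlinarith [pow_pos hb 4, pow_pos hc 4]
  have hs : 0 < s := Real.sqrt_pos.mpr (by linarith)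
  have hs2 : s ^ 2 = 1 - u ^ 2 := Real.sq_sqrt (by linarith)
  have hw2 : w ^ 2 = a ^ 2 * (a ^ 2 - 2 * b ^ 2) - c ^ 4 * u ^ 2 := Real.sq_sqrt (by linarith)
  have d12 : edist' P1 P2 = (a ^ 2 * s + u * w) / (c * s) := edist'_chord ha hc hs hc2 hs2 hw2
  have d32 : edist' P3 P2 = (a ^ 2 * s - u * w) / (c * s) := by
    have := edist'_chord (u := -u) ha hc hs hc2 (by rw [hs2]; ring) (by rw [hw2]; ring)
    rw [mul_neg, neg_mul, ← sub_eq_add_neg] at this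
    exact this
  have d34 : edist' P3 P4 = edist' P1 P2 := by
    rw [← edist'_neg_fst, neg_neg]
  have d14 : edist' P1 P4 = edist' P3 P2 := (edist'_neg_fst _ _ _ _).symm
  rw [edist'_comm P2 P3, edist'_comm P4 P1, d34, d14, d12, d32]
  field_simp
  ring

/-- The perimeter of the self-intersected billiard 4-periodic equals `4a²/c`,
independently of the parameter `u`. -/
theorem perimeter_self_intersected_4periodic
    (a b c u : ℝ) (hab : a > b) (hb : b > 0) (h2 : a^2 > 2*b^2)
    (hc : c > 0) (hc2 : c^2 = a^2 - b^2)
    (hu : |u| ≤ (a / c^2) * Real.sqrt (a^2 - 2*b^2)) :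
    let s := Real.sqrt (1 - u^2)
    let w := Real.sqrt (a^2*(a^2 - 2*b^2) - c^4*u^2)
    let P1 : ℝ × ℝ := (a*u, b*s)
    let P3 : ℝ × ℝ := (-(a*u), b*s)
    let P2 : ℝ × ℝ := (-((a/(c^2*s))*w), -(b^3/(c^2*s)))
    let P4 : ℝ × ℝ := ((a/(c^2*s))*w, -(b^3/(c^2*s)))
    edist' P1 P2 + edist' P2 P3 + edist' P3 P4 + edist' P4 P1 = 4*a^2/c :=
  perimeter_self_intersected_4periodic_general a b c u hb h2 hc hc2 hu
end

section
/- Let a > b > 0 with a² > 2b², c² = a² − b², and |u| < (a/c²)·√(a² − 2b²). Define the four vertices of the self-intersected 4-periodic as P₁ = (a·u, b·√(1−u²)), P₃ = (−a·u, b·√(1−u²)), P₂,₄ = (∓(a/(c²√(1−u²)))·√(a²(a²−2b²) − c⁴u²), −b³/(c²√(1−u²))). Then the six points P₁, P₂, P₃, P₄, (c, 0), (−c, 0) all lie on the circle centered at C = (0, (c²u² − a² + 2b²)/(2b√(1−u²))) with radius R = (a² − c²u²)/(2b√(1−u²)). -/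
theorem edist'_eq_of_sq_add_sq_sub_two_mul_eq {x y k R : ℝ} (hR : 0 ≤ R)
    (h : x ^ 2 + y ^ 2 - 2 * k * y = R ^ 2 - k ^ 2) : edist' (x, y) (0, k) = R := by
  rw [edist', show (x - 0) ^ 2 + (y - k) ^ 2 = R ^ 2 by linear_combination h]
  exact Real.sqrt_sq hR

theorem sq_mul_sq_lt_of_abs_lt_div_mul_sqrt {a d u A : ℝ} (hu : |u| < a / d * √A) :
    d ^ 2 * u ^ 2 < a ^ 2 * A := by
  have hpos : 0 < a / d * √A := (abs_nonneg u).trans_lt hu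
  have hA : 0 ≤ A := by
    by_contra! hA
    simp [Real.sqrt_eq_zero'.2 hA.le] at hpos
  have hd : d ≠ 0 := by
    rintro rfl
    simp at hpos
  have hsq : u ^ 2 < (a / d) ^ 2 * A := by
    rw [← sq_abs u, ← Real.sq_sqrt hA, ← mul_pow]
    exact pow_lt_pow_left₀ hu (abs_nonneg u) two_ne_zero
  calc d ^ 2 * u ^ 2 < d ^ 2 * ((a / d) ^ 2 * A) := by gcongr
    _ = a ^ 2 * A := by field_simp

section Ellipse

variable {a b c u s : ℝ}

theorem sq_lt_one_of_sq_mul_sq_lt (hb : b ≠ 0) (hc2 : c ^ 2 = a ^ 2 - b ^ 2)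
    (h : (c ^ 2) ^ 2 * u ^ 2 < a ^ 2 * (a ^ 2 - 2 * b ^ 2)) : u ^ 2 < 1 := by
  have hb4 : 0 < b ^ 4 := by positivity
  have hc : 0 < (c ^ 2) ^ 2 := by nlinarith
  by_contra! hu
  nlinarith

theorem radius_nonneg (hb : 0 < b) (hs : 0 < s) (hu : u ^ 2 < 1) (hc2 : c ^ 2 = a ^ 2 - b ^ 2) :
    0 ≤ (a ^ 2 - c ^ 2 * u ^ 2) / (2 * b * s) := by
  have : 0 ≤ a ^ 2 - c ^ 2 * u ^ 2 := by nlinarith [sq_nonneg c]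
  positivity

theorem radius_sq_sub_center_sq (hb : b ≠ 0) (hs : s ≠ 0) (hs2 : s ^ 2 = 1 - u ^ 2)
    (hc2 : c ^ 2 = a ^ 2 - b ^ 2) :
    ((a ^ 2 - c ^ 2 * u ^ 2) / (2 * b * s)) ^ 2
      - ((c ^ 2 * u ^ 2 - a ^ 2 + 2 * b ^ 2) / (2 * b * s)) ^ 2 = c ^ 2 := by
  field_simp
  linear_combination (-4 * b ^ 2 * c ^ 2) * hs2 - 4 * b ^ 2 * hc2

theorem upper_vertex_sq_add_sq_sub_two_mul_eq (hb : b ≠ 0) (hs : s ≠ 0) (hs2 : s ^ 2 = 1 - u ^ 2)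
    (hc2 : c ^ 2 = a ^ 2 - b ^ 2) :
    (a * u) ^ 2 + (b * s) ^ 2
      - 2 * ((c ^ 2 * u ^ 2 - a ^ 2 + 2 * b ^ 2) / (2 * b * s)) * (b * s) = c ^ 2 := by
  field_simp
  linear_combination b ^ 2 * hs2 - (1 + u ^ 2) * hc2

theorem lower_vertex_sq_add_sq_sub_two_mul_eq {w : ℝ} (hs : s ≠ 0) (hc : c ≠ 0)
    (hs2 : s ^ 2 = 1 - u ^ 2) (hc2 : c ^ 2 = a ^ 2 - b ^ 2)
    (hw2 : w ^ 2 = a ^ 2 * (a ^ 2 - 2 * b ^ 2) - c ^ 4 * u ^ 2) :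
    (a / (c ^ 2 * s) * w) ^ 2 + (-(b ^ 3 / (c ^ 2 * s))) ^ 2
      - 2 * ((c ^ 2 * u ^ 2 - a ^ 2 + 2 * b ^ 2) / (2 * b * s)) * (-(b ^ 3 / (c ^ 2 * s)))
      = c ^ 2 := by
  field_simp
  linear_combination a ^ 2 * hw2 - c ^ 6 * hs2
    + (c ^ 4 * u ^ 2 - c ^ 4 - (a ^ 2 - b ^ 2) * c ^ 2 + 2 * b ^ 4 - a ^ 2 * b ^ 2
      - (a ^ 2 - b ^ 2) ^ 2) * hc2

end Ellipse

theorem self_intersected_4periodic_concyclic_with_foci_general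
    (a b c u : ℝ) (hb : b > 0)
    (hc2 : c^2 = a^2 - b^2)
    (hu : |u| < (a / c^2) * Real.sqrt (a^2 - 2*b^2)) :
    let s := Real.sqrt (1 - u^2)
    let w := Real.sqrt (a^2*(a^2 - 2*b^2) - c^4*u^2)
    let P1 : ℝ × ℝ := (a*u, b*s)
    let P3 : ℝ × ℝ := (-(a*u), b*s)
    let P2 : ℝ × ℝ := (-((a/(c^2*s))*w), -(b^3/(c^2*s)))
    let P4 : ℝ × ℝ := ((a/(c^2*s))*w, -(b^3/(c^2*s)))
    let C : ℝ × ℝ := (0, (c^2*u^2 - a^2 + 2*b^2)/(2*b*s))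
    let R := (a^2 - c^2*u^2)/(2*b*s)
    edist' P1 C = R ∧ edist' P2 C = R ∧ edist' P3 C = R ∧ edist' P4 C = R ∧
      edist' ((c, 0) : ℝ × ℝ) C = R ∧ edist' ((-c, 0) : ℝ × ℝ) C = R := by
  intro s w P1 P3 P2 P4 C R
  have hcu := sq_mul_sq_lt_of_abs_lt_div_mul_sqrt hu
  have hu1 : u ^ 2 < 1 := sq_lt_one_of_sq_mul_sq_lt hb.ne' hc2 hcu
  have hc : c ≠ 0 := by
    rintro rfl
    simpa using (abs_nonneg u).trans_lt hu
  have hs : 0 < s := Real.sqrt_pos.2 (by linarith)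
  have hs2 : s ^ 2 = 1 - u ^ 2 := Real.sq_sqrt (by linarith)
  have hw2 : w ^ 2 = a ^ 2 * (a ^ 2 - 2 * b ^ 2) - c ^ 4 * u ^ 2 :=
    Real.sq_sqrt (by linarith [show c ^ 4 = (c ^ 2) ^ 2 by ring])
  have hR : 0 ≤ R := radius_nonneg hb hs hu1 hc2
  have hRC := radius_sq_sub_center_sq hb.ne' hs.ne' hs2 hc2
  have hupper := upper_vertex_sq_add_sq_sub_two_mul_eq hb.ne' hs.ne' hs2 hc2
  have hlower := lower_vertex_sq_add_sq_sub_two_mul_eq hs.ne' hc hs2 hc2 hw2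
  refine ⟨?_, ?_, ?_, ?_, ?_, ?_⟩ <;> apply edist'_eq_of_sq_add_sq_sub_two_mul_eq hR <;>
    rw [hRC]
  · exact hupper
  · rwa [neg_sq]
  · rwa [neg_sq]
  · exact hlower
  · ring
  · ring

/-- The vertices of the self-intersected 4-periodic are concyclic with the two foci
`(±c, 0)` on the circle of center `C = (0, (c²u²−a²+2b²)/(2b√(1−u²)))` and radius
`R = (a²−c²u²)/(2b√(1−u²))`. -/
theorem self_intersected_4periodic_concyclic_with_foci
    (a b c u : ℝ) (hab : a > b) (hb : b > 0) (h2 : a^2 > 2*b^2)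
    (hc : c > 0) (hc2 : c^2 = a^2 - b^2)
    (hu : |u| < (a / c^2) * Real.sqrt (a^2 - 2*b^2)) :
    let s := Real.sqrt (1 - u^2)
    let w := Real.sqrt (a^2*(a^2 - 2*b^2) - c^4*u^2)
    let P1 : ℝ × ℝ := (a*u, b*s)
    let P3 : ℝ × ℝ := (-(a*u), b*s)
    let P2 : ℝ × ℝ := (-((a/(c^2*s))*w), -(b^3/(c^2*s)))
    let P4 : ℝ × ℝ := ((a/(c^2*s))*w, -(b^3/(c^2*s)))
    let C : ℝ × ℝ := (0, (c^2*u^2 - a^2 + 2*b^2)/(2*b*s))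
    let R := (a^2 - c^2*u^2)/(2*b*s)
    edist' P1 C = R ∧ edist' P2 C = R ∧ edist' P3 C = R ∧ edist' P4 C = R ∧
      edist' ((c, 0) : ℝ × ℝ) C = R ∧ edist' ((-c, 0) : ℝ × ℝ) C = R :=
  self_intersected_4periodic_concyclic_with_foci_general a b c u hb hc2 hu
end

section
/- Let a > b > 0 with a² > 2b², c² = a² − b², and |u| < (a/c²)·√(a² − 2b²). Define R = (a² − c²u²)/(2b√(1−u²)) and R' = (c(c²u² − a²))/(a² + (u² − 2)c²). Then 1/R² + 1/R'² = 1/c². -/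
/-- Pythagorean-type invariant: the half harmonic mean relation
`1/R² + 1/R'² = 1/c²` between the circumradius `R` of the self-intersected
4-periodic's circle and the radius `R'` of its outer polygon's circle. -/
theorem inv_radius_pythagorean
    (a b c u : ℝ) (hab : a > b) (hb : b > 0) (h2 : a^2 > 2*b^2)
    (hc : c > 0) (hc2 : c^2 = a^2 - b^2)
    (hu : |u| < (a / c^2) * Real.sqrt (a^2 - 2*b^2)) :
    let R := (a^2 - c^2*u^2)/(2*b*Real.sqrt (1 - u^2))
    let R' := (c*(c^2*u^2 - a^2))/(a^2 + (u^2 - 2)*c^2)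
    1/R^2 + 1/R'^2 = 1/c^2 := by
  have ha : a > 0 := lt_trans hb hab
  have hrt : (Real.sqrt (a^2 - 2*b^2))^2 = a^2 - 2*b^2 := Real.sq_sqrt (by linarith)
  have hu2 : u^2 < 1 := by
    have h1 : |u|^2 < ((a / c^2) * Real.sqrt (a^2 - 2*b^2))^2 :=
      pow_lt_pow_left₀ hu (abs_nonneg u) (by norm_num)
    rw [sq_abs, mul_pow, hrt, div_pow] at h1
    have hc2pos : (c^2)^2 > 0 := by positivity
    rw [div_mul_eq_mul_div, lt_div_iff₀ hc2pos] at h1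
    nlinarith [sq_nonneg b, sq_nonneg (b^2)]
  have hs : Real.sqrt (1 - u^2) > 0 := Real.sqrt_pos.mpr (by linarith)
  have hs2 : (Real.sqrt (1 - u^2))^2 = 1 - u^2 := Real.sq_sqrt (by linarith)
  have hca : c^2 < a^2 := by nlinarith
  have hD : a^2 - c^2*u^2 > 0 := by nlinarith [sq_nonneg u, mul_pos hc hc]
  intro R R'
  show 1/R^2 + 1/R'^2 = 1/c^2
  have hR2 : 1/R^2 = (4*b^2*(1 - u^2))/((a^2 - c^2*u^2)^2) := by
    show 1/((a^2 - c^2*u^2)/(2*b*Real.sqrt (1 - u^2)))^2 = _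
    rw [div_pow, one_div_div, mul_pow, mul_pow, hs2]
    ring_nf
  have hR'2 : 1/R'^2 = (a^2 + (u^2 - 2)*c^2)^2/(c^2*(a^2 - c^2*u^2)^2) := by
    show 1/((c*(c^2*u^2 - a^2))/(a^2 + (u^2 - 2)*c^2))^2 = _
    by_cases hE : a^2 + (u^2 - 2)*c^2 = 0
    · rw [hE, div_zero]
      norm_num
    · rw [div_pow, one_div_div, mul_pow]
      rw [show (c^2*u^2 - a^2)^2 = (a^2 - c^2*u^2)^2 by ring]
  have hb2 : b^2 = a^2 - c^2 := by linarith
  have hD2 : (a^2 - c^2*u^2)^2 ≠ 0 := by positivity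
  have hc2' : c^2 ≠ 0 := by positivity
  rw [hR2, hR'2, hb2]
  field_simp
  ring
end

section
/- Let a > b > 0 with a² > 2b², c² = a² − b², and |u| < (a/c²)·√(a² − 2b²). Let C = (0, (c²u² − a² + 2b²)/(2b√(1−u²))) and R = (a² − c²u²)/(2b√(1−u²)). Then the power of the origin with respect to the circle of center C and radius R, namely |C|² − R², equals b² − a², independent of u. -/
/-- The power of the origin with respect to the circle `(C, R)` through the
vertices of the self-intersected 4-periodic and the two foci is the constant
`b² − a²`, independent of `u`. -/
theorem power_of_origin_invariant
    (a b c u : ℝ) (hab : a > b) (hb : b > 0) (h2 : a^2 > 2*b^2)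
    (hc : c > 0) (hc2 : c^2 = a^2 - b^2)
    (hu : |u| < (a / c^2) * Real.sqrt (a^2 - 2*b^2)) :
    let C : ℝ × ℝ := (0, (c^2*u^2 - a^2 + 2*b^2)/(2*b*Real.sqrt (1 - u^2)))
    let R := (a^2 - c^2*u^2)/(2*b*Real.sqrt (1 - u^2))
    C.1^2 + C.2^2 - R^2 = b^2 - a^2 := by
  intro C R
  have ha : a > 0 := lt_trans hb hab
  have hc4 : (0:ℝ) < c^2 := by positivity
  have hbound : (a / c^2) * Real.sqrt (a^2 - 2*b^2) < 1 := by
    rw [show (1:ℝ) = Real.sqrt 1 by simp]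
    have : (a / c^2) * Real.sqrt (a^2 - 2*b^2)
        = Real.sqrt ((a/c^2)^2 * (a^2 - 2*b^2)) := by
      rw [Real.sqrt_mul (by positivity), Real.sqrt_sq (by positivity)]
    rw [this]
    apply Real.sqrt_lt_sqrt (mul_nonneg (by positivity) (by linarith))
    rw [div_pow, div_mul_eq_mul_div, div_lt_one (by positivity), hc2]
    nlinarith [pow_pos hb 4]
  have hu1 : u^2 < 1 := by
    have h1 : |u| < 1 := lt_trans hu hbound
    have := abs_nonneg u
    nlinarith [sq_abs u]
  have hs : Real.sqrt (1 - u^2) > 0 := Real.sqrt_pos.mpr (by linarith)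
  have hs2 : Real.sqrt (1 - u^2) ^ 2 = 1 - u^2 := Real.sq_sqrt (by linarith)
  show (0:ℝ)^2 + ((c^2*u^2 - a^2 + 2*b^2)/(2*b*Real.sqrt (1 - u^2)))^2
      - ((a^2 - c^2*u^2)/(2*b*Real.sqrt (1 - u^2)))^2 = b^2 - a^2
  field_simp
  rw [hc2]
  linear_combination (4*b^2*(a^2-b^2))*hs2
end

section
/- Let a > b > 0 with a² > 2b², c² = a² − b². Each midpoint M of a segment of the self-intersected 4-periodic (as parametrized by u with |u| ≤ (a/c²)√(a²−2b²)) satisfies the quartic equation c²(b²x² + a²y²)² − b⁴a²((a² − 2b²)x² − a²y²) = 0, where M = (x, y). -/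
/-! In the coordinates `(x/a, y/b)` the ellipse becomes the unit circle, and for unit vectors
`p, q` with midpoint `m` one has `|m|⁴ - p₂q₂|m|² = m₁²`. If `P, Q` are consecutive vertices
of the self-intersected 4-periodic then `c²P₂Q₂ = -b⁴`, which turns this identity into the
quartic. -/

/-- Midpoint of two points of the plane. -/
noncomputable def mid' (p q : ℝ × ℝ) : ℝ × ℝ := ((p.1 + q.1)/2, (p.2 + q.2)/2)

/-- The ellipse `x²/a² + y²/b² = 1` is `ellipseForm a b p = a²b²`. -/
def ellipseForm (a b : ℝ) (p : ℝ × ℝ) : ℝ := b^2*p.1^2 + a^2*p.2^2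

def quartic (a b c : ℝ) (p : ℝ × ℝ) : ℝ :=
  c^2*(ellipseForm a b p)^2 - b^4*a^2*((a^2 - 2*b^2)*p.1^2 - a^2*p.2^2)

section Ellipse

variable {a b : ℝ} {P Q : ℝ × ℝ}

theorem sq_ellipseForm_mid'_sub (hP : ellipseForm a b P = a^2*b^2)
    (hQ : ellipseForm a b Q = a^2*b^2) :
    ellipseForm a b (mid' P Q)^2 - a^2*(P.2*Q.2)*ellipseForm a b (mid' P Q)
      = a^2*b^4*(mid' P Q).1^2 := by
  obtain ⟨x₁, y₁⟩ := P
  obtain ⟨x₂, y₂⟩ := Q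
  simp only [ellipseForm, mid'] at *
  set e₁ := b^2*x₁^2 + a^2*y₁^2 - a^2*b^2
  set e₂ := b^2*x₂^2 + a^2*y₂^2 - a^2*b^2
  linear_combination (b^2*(x₂^2 + x₁*x₂)/4 + (e₁ + e₂)/16) * hP
    + (b^2*(x₁^2 + x₁*x₂)/4 - e₁/4 + (e₁ + e₂)/16) * hQ

theorem quartic_mid'_eq_zero {c : ℝ} (hP : ellipseForm a b P = a^2*b^2)
    (hQ : ellipseForm a b Q = a^2*b^2) (hPQ : c^2*(P.2*Q.2) = -b^4)
    (hc2 : c^2 = a^2 - b^2) : quartic a b c (mid' P Q) = 0 := by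
  have key := sq_ellipseForm_mid'_sub hP hQ
  generalize mid' P Q = M at key ⊢
  unfold quartic ellipseForm at *
  linear_combination (a^2*b^4*M.1^2) * hc2
    + (a^2*(b^2*M.1^2 + a^2*M.2^2)) * hPQ + c^2 * key

end Ellipse

theorem pow_four_mul_sq_le_of_abs_le {a c u A : ℝ} (hA : 0 ≤ A) (hu : |u| ≤ a / c^2 * √A) :
    c^4*u^2 ≤ a^2*A := by
  have hsq := pow_le_pow_left₀ (abs_nonneg u) hu 2
  rw [sq_abs, mul_pow, div_pow, Real.sq_sqrt hA] at hsq
  rcases eq_or_ne c 0 with rfl | hc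
  · rw [zero_pow four_ne_zero, zero_mul]
    positivity
  · calc c^4*u^2 ≤ c^4*((a^2/(c^2)^2)*A) := by gcongr
      _ = a^2*A := by field_simp

theorem midpoints_on_quartic_general
    (a b c u : ℝ) (hb : b > 0) (h2 : a^2 > 2*b^2)
    (hc2 : c^2 = a^2 - b^2)
    (hu : |u| ≤ (a / c^2) * Real.sqrt (a^2 - 2*b^2)) :
    let s := Real.sqrt (1 - u^2)
    let w := Real.sqrt (a^2*(a^2 - 2*b^2) - c^4*u^2)
    let P1 : ℝ × ℝ := (a*u, b*s)
    let P3 : ℝ × ℝ := (-(a*u), b*s)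
    let P2 : ℝ × ℝ := (-((a/(c^2*s))*w), -(b^3/(c^2*s)))
    let P4 : ℝ × ℝ := ((a/(c^2*s))*w, -(b^3/(c^2*s)))
    let F : ℝ × ℝ → ℝ := fun p =>
      c^2*(b^2*p.1^2 + a^2*p.2^2)^2 - b^4*a^2*((a^2 - 2*b^2)*p.1^2 - a^2*p.2^2)
    F (mid' P1 P2) = 0 ∧ F (mid' P2 P3) = 0 ∧ F (mid' P3 P4) = 0 ∧
      F (mid' P4 P1) = 0 := by
  intro s w P1 P3 P2 P4 F
  have hc0 : c ≠ 0 := by rintro rfl; nlinarith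
  have hcu : c^4*u^2 ≤ a^2*(a^2 - 2*b^2) := pow_four_mul_sq_le_of_abs_le (by linarith) hu
  have hu1 : u^2 < 1 := by
    have hlt : a^2*(a^2 - 2*b^2) < c^4 := by
      rw [show c^4 = (c^2)^2 by ring, hc2]; nlinarith [pow_pos hb 4]
    exact lt_of_mul_lt_mul_left (by linarith) (by positivity : (0:ℝ) ≤ c^4)
  have hs2 : s^2 = 1 - u^2 := Real.sq_sqrt (by linarith)
  have hs : s ≠ 0 := (Real.sqrt_pos.2 (by linarith)).ne'
  have hw2 : w^2 = a^2*(a^2 - 2*b^2) - c^4*u^2 := Real.sq_sqrt (by linarith)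
  have hP1 : ellipseForm a b P1 = a^2*b^2 := by
    simp only [ellipseForm, P1]; linear_combination a^2*b^2*hs2
  have hP3 : ellipseForm a b P3 = a^2*b^2 := by simpa only [ellipseForm, P1, P3, neg_sq] using hP1
  have hP4 : ellipseForm a b P4 = a^2*b^2 := by
    simp only [ellipseForm, P4]
    field_simp
    linear_combination a^2*hw2 - a^2*c^4*hs2 - a^2*(c^2 + a^2 - b^2)*hc2
  have hP2 : ellipseForm a b P2 = a^2*b^2 := by simpa only [ellipseForm, P2, P4, neg_sq] using hP4
  have hy : c^2*(P1.2*P2.2) = -b^4 := by simp only [P1, P2]; field_simp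
  have hy' : c^2*(P2.2*P1.2) = -b^4 := by rw [mul_comm P2.2]; exact hy
  exact ⟨quartic_mid'_eq_zero hP1 hP2 hy hc2, quartic_mid'_eq_zero hP2 hP3 hy' hc2,
    quartic_mid'_eq_zero hP3 hP4 hy hc2, quartic_mid'_eq_zero hP4 hP1 hy' hc2⟩

/-- Each midpoint of a side of the self-intersected 4-periodic lies on the quartic
`c²(b²x² + a²y²)² − b⁴a²((a² − 2b²)x² − a²y²) = 0`. -/
theorem midpoints_on_quartic
    (a b c u : ℝ) (hab : a > b) (hb : b > 0) (h2 : a^2 > 2*b^2)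
    (hc : c > 0) (hc2 : c^2 = a^2 - b^2)
    (hu : |u| ≤ (a / c^2) * Real.sqrt (a^2 - 2*b^2)) :
    let s := Real.sqrt (1 - u^2)
    let w := Real.sqrt (a^2*(a^2 - 2*b^2) - c^4*u^2)
    let P1 : ℝ × ℝ := (a*u, b*s)
    let P3 : ℝ × ℝ := (-(a*u), b*s)
    let P2 : ℝ × ℝ := (-((a/(c^2*s))*w), -(b^3/(c^2*s)))
    let P4 : ℝ × ℝ := ((a/(c^2*s))*w, -(b^3/(c^2*s)))
    let F : ℝ × ℝ → ℝ := fun p =>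
      c^2*(b^2*p.1^2 + a^2*p.2^2)^2 - b^4*a^2*((a^2 - 2*b^2)*p.1^2 - a^2*p.2^2)
    F (mid' P1 P2) = 0 ∧ F (mid' P2 P3) = 0 ∧ F (mid' P3 P4) = 0 ∧
      F (mid' P4 P1) = 0 :=
  midpoints_on_quartic_general a b c u hb h2 hc2 hu
end

section
/- The quartic curve c²(b²x² + a²y²)² − b⁴a²((a² − 2b²)x² − a²y²) = 0 passes through the points (±a√(a² − 2b²)/c, 0), which are the vertices of the hyperbola x²/a''² − y²/b''² = 1 with a'' = a√(a² − 2b²)/c, b'' = b²/c, and the curve is tangent to this hyperbola at those points (their tangent lines there coincide, being vertical). -/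
/-!
Both curves are even in `y`, so their `y`-derivatives vanish on the `x`-axis. On the axis
the quartic restricts to `b⁴x²(c²x² − a²(a² − 2b²))`, whose nonzero roots, given by
`c²x² = a²(a² − 2b²)`, are exactly the vertices `x = ±a''` of the hyperbola. There the
`x`-derivative of the quartic is `2a²b⁴(a² − 2b²)x ≠ 0` and that of the hyperbola is `2x/a''² ≠ 0`.
-/

theorem Function.Even.deriv_zero {𝕜 F : Type*} [NontriviallyNormedField 𝕜]
    [NormedAddCommGroup F] [NormedSpace 𝕜 F] [IsAddTorsionFree F] {f : 𝕜 → F}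
    (hf : f.Even) : deriv f 0 = 0 := by
  have h := deriv_comp_neg (f := f) (x := 0)
  rw [funext hf, neg_zero] at h
  exact self_eq_neg.mp h

def midpointQuartic (a b c x y : ℝ) : ℝ :=
  c^2*(b^2*x^2 + a^2*y^2)^2 - b^4*a^2*((a^2 - 2*b^2)*x^2 - a^2*y^2)

noncomputable def hyperbolaForm (A B x y : ℝ) : ℝ := x^2/A^2 - y^2/B^2 - 1

section MidpointQuartic

variable (a b c : ℝ)

theorem midpointQuartic_even (x : ℝ) : (midpointQuartic a b c x).Even := fun y => by
  simp only [midpointQuartic, even_two, Even.neg_pow]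

theorem midpointQuartic_x_axis (x : ℝ) :
    midpointQuartic a b c x 0 = b^4*x^2*(c^2*x^2 - a^2*(a^2 - 2*b^2)) := by
  simp only [midpointQuartic]; ring

theorem hasDerivAt_midpointQuartic_x_axis (x : ℝ) :
    HasDerivAt (fun x => midpointQuartic a b c x 0)
      (2*b^4*x*(2*c^2*x^2 - a^2*(a^2 - 2*b^2))) x := by
  have h := ((hasDerivAt_pow 4 x).const_mul (b^4*c^2)).sub
    ((hasDerivAt_pow 2 x).const_mul (b^4*a^2*(a^2 - 2*b^2)))
  refine (h.congr_deriv (by push_cast; ring)).congr_of_eventuallyEq (.of_forall fun y => ?_)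
  simp only [Pi.sub_apply, midpointQuartic_x_axis]; ring

variable {a b c}

theorem midpointQuartic_vertex_eq_zero {x : ℝ} (hx : c^2*x^2 = a^2*(a^2 - 2*b^2)) :
    midpointQuartic a b c x 0 = 0 := by
  rw [midpointQuartic_x_axis, hx, sub_self, mul_zero]

theorem deriv_midpointQuartic_vertex_ne_zero (ha : a ≠ 0) (hb : b ≠ 0) (hq : a^2 - 2*b^2 ≠ 0)
    {x : ℝ} (hx : c^2*x^2 = a^2*(a^2 - 2*b^2)) :
    deriv (fun x => midpointQuartic a b c x 0) x ≠ 0 := by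
  have hx0 : x ≠ 0 := by
    rintro rfl
    exact (by positivity : a^2*(a^2 - 2*b^2) ≠ 0) (by simpa using hx.symm)
  rw [(hasDerivAt_midpointQuartic_x_axis a b c x).deriv,
    show 2*c^2*x^2 - a^2*(a^2 - 2*b^2) = a^2*(a^2 - 2*b^2) by linear_combination 2*hx]
  positivity

end MidpointQuartic

section HyperbolaForm

variable (A B : ℝ)

theorem hyperbolaForm_even (x : ℝ) : (hyperbolaForm A B x).Even := fun y => by
  simp only [hyperbolaForm, even_two, Even.neg_pow]

theorem hasDerivAt_hyperbolaForm_x_axis (x : ℝ) :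
    HasDerivAt (fun x => hyperbolaForm A B x 0) (2*x/A^2) x := by
  have h := ((hasDerivAt_pow 2 x).div_const (A^2)).sub_const 1
  refine (h.congr_deriv (by push_cast; ring)).congr_of_eventuallyEq (.of_forall fun y => ?_)
  simp only [hyperbolaForm]; ring

variable {A B}

theorem hyperbolaForm_vertex_eq_zero (hA : A ≠ 0) {x : ℝ} (hx : x^2 = A^2) :
    hyperbolaForm A B x 0 = 0 := by
  simp [hyperbolaForm, hx, hA]

theorem deriv_hyperbolaForm_ne_zero (hA : A ≠ 0) {x : ℝ} (hx : x ≠ 0) :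
    deriv (fun x => hyperbolaForm A B x 0) x ≠ 0 := by
  rw [(hasDerivAt_hyperbolaForm_x_axis A B x).deriv]
  positivity

end HyperbolaForm

theorem quartic_tangent_to_caustic_at_vertices_general
    (a b c : ℝ) (hb : b > 0) (h2 : a^2 > 2*b^2)
    (hc : c > 0) :
    let v : ℝ := a * Real.sqrt (a^2 - 2*b^2) / c
    let a'' : ℝ := a * Real.sqrt (a^2 - 2*b^2) / c
    let b'' : ℝ := b^2 / c
    let F : ℝ → ℝ → ℝ := fun x y =>
      c^2*(b^2*x^2 + a^2*y^2)^2 - b^4*a^2*((a^2 - 2*b^2)*x^2 - a^2*y^2)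
    let G : ℝ → ℝ → ℝ := fun x y => x^2/a''^2 - y^2/b''^2 - 1
    ∀ ε : ℝ, ε = 1 ∨ ε = -1 →
      -- both curves pass through the hyperbola vertex (ε·v, 0)
      (F (ε*v) 0 = 0 ∧ G (ε*v) 0 = 0) ∧
      -- both have vertical tangent there: ∂/∂y vanishes, ∂/∂x does not
      (deriv (fun y => F (ε*v) y) 0 = 0 ∧ deriv (fun x => F x 0) (ε*v) ≠ 0) ∧
      (deriv (fun y => G (ε*v) y) 0 = 0 ∧ deriv (fun x => G x 0) (ε*v) ≠ 0) := by
  intro v a'' b'' F G ε hε_sign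
  have hq : 0 < a^2 - 2*b^2 := by linarith
  have ha : a ≠ 0 := by rintro rfl; nlinarith
  have hε : ε^2 = 1 := by rcases hε_sign with rfl | rfl <;> norm_num
  have hv : v ≠ 0 := by positivity
  have hεv : ε*v ≠ 0 := mul_ne_zero (by rintro rfl; simp at hε) hv
  have hεv_sq : (ε*v)^2 = a''^2 := by rw [mul_pow, hε, one_mul]
  have hvertex : c^2*(ε*v)^2 = a^2*(a^2 - 2*b^2) := by
    rw [hεv_sq, div_pow, mul_pow, Real.sq_sqrt hq.le]
    field_simp
  exact ⟨⟨midpointQuartic_vertex_eq_zero hvertex, hyperbolaForm_vertex_eq_zero hv hεv_sq⟩,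
    ⟨(midpointQuartic_even a b c _).deriv_zero,
      deriv_midpointQuartic_vertex_ne_zero ha hb.ne' hq.ne' hvertex⟩,
    ⟨(hyperbolaForm_even a'' b'' _).deriv_zero, deriv_hyperbolaForm_ne_zero hv hεv⟩⟩

/-- The quartic locus of midpoints passes through the vertices
`(±a√(a²−2b²)/c, 0)` of the confocal hyperbolic caustic, and both curves have a
vertical tangent line there (the partial derivative in `y` vanishes while the
partial derivative in `x` does not, for both curves), so they are tangent at
those points. -/
theorem quartic_tangent_to_caustic_at_vertices
    (a b c : ℝ) (hab : a > b) (hb : b > 0) (h2 : a^2 > 2*b^2)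
    (hc : c > 0) (hc2 : c^2 = a^2 - b^2) :
    let v : ℝ := a * Real.sqrt (a^2 - 2*b^2) / c
    let a'' : ℝ := a * Real.sqrt (a^2 - 2*b^2) / c
    let b'' : ℝ := b^2 / c
    let F : ℝ → ℝ → ℝ := fun x y =>
      c^2*(b^2*x^2 + a^2*y^2)^2 - b^4*a^2*((a^2 - 2*b^2)*x^2 - a^2*y^2)
    let G : ℝ → ℝ → ℝ := fun x y => x^2/a''^2 - y^2/b''^2 - 1
    ∀ ε : ℝ, ε = 1 ∨ ε = -1 →
      -- both curves pass through the hyperbola vertex (ε·v, 0)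
      (F (ε*v) 0 = 0 ∧ G (ε*v) 0 = 0) ∧
      -- both have vertical tangent there: ∂/∂y vanishes, ∂/∂x does not
      (deriv (fun y => F (ε*v) y) 0 = 0 ∧ deriv (fun x => F x 0) (ε*v) ≠ 0) ∧
      (deriv (fun y => G (ε*v) y) 0 = 0 ∧ deriv (fun x => G x 0) (ε*v) ≠ 0) :=
  quartic_tangent_to_caustic_at_vertices_general a b c hb h2 hc
end

section
/- Let a > b > 0, c² = a² − b², δ = √(a⁴ − a²b² + b⁴), J = √(2δ − a² − b²)/c², and L = 2(δ + a² + b²)·J. Then ((a² + b²)(2δ − a² − b²))/c⁴ = J·L − 3. (Equivalently, the N=3 invariant k₁₀₄ = −(a²+b²)(a²+b²−2δ)/c⁴ satisfies k₁₀₄ = 3 − J·L.) -/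
/-- For billiard 3-periodics: with `δ = √(a⁴ − a²b² + b⁴)`,
`J = √(2δ − a² − b²)/c²` and `L = 2*(δ + a² + b²)·J`, one has
`(a² + b²)(2δ − a² − b²)/c⁴ = J·L − 3`, i.e. `k₁₀₄ = 3 − J·L`. -/
theorem n3_k104 (a b c : ℝ) (hab : a > b) (hb : b > 0)
    (hc : c > 0) (hc2 : c^2 = a^2 - b^2) :
    let δ := Real.sqrt (a^4 - a^2*b^2 + b^4)
    let J := Real.sqrt (2*δ - a^2 - b^2) / c^2
    let L := 2*(δ + a^2 + b^2) * J
    (a^2 + b^2)*(2*δ - a^2 - b^2)/c^4 = J*L - 3 := by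
  intro δ J L
  have hδnn : (0:ℝ) ≤ δ := Real.sqrt_nonneg _
  have hδsq : δ^2 = a^4 - a^2*b^2 + b^4 := by
    have h : (0:ℝ) ≤ a^4 - a^2*b^2 + b^4 := by nlinarith [sq_nonneg (a^2-b^2), sq_nonneg (a*b)]
    show (Real.sqrt (a^4 - a^2*b^2 + b^4))^2 = _
    exact Real.sq_sqrt h
  have hcc : c^2 > 0 := by positivity
  have h2δ : (0:ℝ) ≤ 2*δ - a^2 - b^2 := by
    nlinarith [sq_nonneg (a^2-b^2), sq_nonneg (2*δ - a^2 - b^2)]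
  set S := Real.sqrt (2*δ - a^2 - b^2) with hSdef
  have hSsq : S^2 = 2*δ - a^2 - b^2 := Real.sq_sqrt h2δ
  have hJL : J*L = 2*(δ + a^2 + b^2) * (2*δ - a^2 - b^2) / c^4 := by
    show (S / c^2) * (2*(δ + a^2 + b^2) * (S / c^2)) = _
    rw [← hSsq]
    field_simp
  rw [hJL]
  have hc4 : c^4 ≠ 0 := by positivity
  field_simp
  nlinarith [hδsq, sq_nonneg (a^2-b^2)]
end

section
/- Let a > b > 0, δ = √(a⁴ − a²b² + b⁴), c² = a² − b², J = √(2δ − a² − b²)/c², and L = 2(δ + a² + b²)·J. Then ((a² + b² + δ)/(ab)^{4/3})³ = 2·J³·L/(J·L − 4)². -/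
/-!
Put `s = a² + b²` and `q = (ab)²`, so that `δ² = s² − 3q` and `c⁴ = s² − 4q`. Then
`c⁴ (J L − 4) = 2 D` with `D = δ s − s² + 2q`, and the relation `δ² = s² − 3q` factors as
`(s + δ) D = q (2δ − s) = q u²`, where `u = c² J`. Eliminating `D` turns `2J³L/(JL − 4)²`
into `(s + δ)³/q²`, which is the cube of `k₁₁₉` because `((ab)^{4/3})³ = (ab)⁴`.
-/

section BilliardIdentity

variable {K : Type*} [Field K] {a b c δ u : K}

/-- `c⁴ (J L − 4) / 2`, written in terms of `a`, `b` and `δ` only. -/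
def jlDefect (a b δ : K) : K := δ * (a ^ 2 + b ^ 2) - (a ^ 2 + b ^ 2) ^ 2 + 2 * (a * b) ^ 2

theorem add_mul_jlDefect (hδ : δ ^ 2 = a ^ 4 - a ^ 2 * b ^ 2 + b ^ 4) :
    (a ^ 2 + b ^ 2 + δ) * jlDefect a b δ = (a * b) ^ 2 * (2 * δ - a ^ 2 - b ^ 2) := by
  unfold jlDefect
  linear_combination (a ^ 2 + b ^ 2) * hδ

theorem two_mul_sub_ne_zero [CharZero K] (hδ : δ ^ 2 = a ^ 4 - a ^ 2 * b ^ 2 + b ^ 4)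
    (hc : c ^ 2 = a ^ 2 - b ^ 2) (hc0 : c ≠ 0) : 2 * δ - a ^ 2 - b ^ 2 ≠ 0 := by
  intro h
  -- `(2δ − a² − b²)(2δ + a² + b²) = 3c⁴`
  have : 3 * c ^ 4 = 0 := by
    linear_combination (2 * δ + a ^ 2 + b ^ 2) * h - 4 * hδ + 3 * (c ^ 2 + a ^ 2 - b ^ 2) * hc
  exact hc0 (by simpa using this)

theorem mul_sub_four_eq_jlDefect (hδ : δ ^ 2 = a ^ 4 - a ^ 2 * b ^ 2 + b ^ 4)
    (hu : u ^ 2 = 2 * δ - a ^ 2 - b ^ 2) (hc : c ^ 2 = a ^ 2 - b ^ 2) (hc0 : c ≠ 0) :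
    u / c ^ 2 * (2 * (δ + a ^ 2 + b ^ 2) * (u / c ^ 2)) - 4 = 2 * jlDefect a b δ / c ^ 4 := by
  unfold jlDefect
  field_simp
  linear_combination 2 * (δ + a ^ 2 + b ^ 2) * hu + 4 * hδ - 4 * (c ^ 2 + a ^ 2 - b ^ 2) * hc

theorem two_mul_cube_mul_div_sq_eq [CharZero K] (hδ : δ ^ 2 = a ^ 4 - a ^ 2 * b ^ 2 + b ^ 4)
    (hu : u ^ 2 = 2 * δ - a ^ 2 - b ^ 2) (hc : c ^ 2 = a ^ 2 - b ^ 2) (hc0 : c ≠ 0)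
    (hab : a * b ≠ 0) :
    2 * (u / c ^ 2) ^ 3 * (2 * (δ + a ^ 2 + b ^ 2) * (u / c ^ 2)) /
        (u / c ^ 2 * (2 * (δ + a ^ 2 + b ^ 2) * (u / c ^ 2)) - 4) ^ 2 =
      (a ^ 2 + b ^ 2 + δ) ^ 3 / (a * b) ^ 4 := by
  have hkey := add_mul_jlDefect hδ
  have hD : jlDefect a b δ ≠ 0 := by
    refine right_ne_zero_of_mul (hkey ▸ mul_ne_zero (pow_ne_zero 2 hab) ?_)
    exact two_mul_sub_ne_zero hδ hc hc0
  obtain ⟨ha, hb⟩ := mul_ne_zero_iff.mp hab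
  rw [mul_sub_four_eq_jlDefect hδ hu hc hc0]
  field_simp
  -- both sides differ by a multiple of `(u² (ab)²)² − ((a² + b² + δ) D)²`
  linear_combination (δ + a ^ 2 + b ^ 2) *
    (u ^ 2 * (a * b) ^ 2 + (a ^ 2 + b ^ 2 + δ) * jlDefect a b δ) * ((a * b) ^ 2 * hu - hkey)

end BilliardIdentity

theorem pow_four_sub_mul_add_pow_four_nonneg {R : Type*} [CommRing R] [LinearOrder R]
    [IsStrictOrderedRing R] (a b : R) : 0 ≤ a ^ 4 - a ^ 2 * b ^ 2 + b ^ 4 := by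
  nlinarith [sq_nonneg (a ^ 2 - b ^ 2), sq_nonneg (a * b)]

theorem two_mul_sqrt_pow_four_sub_nonneg (a b : ℝ) :
    0 ≤ 2 * √(a ^ 4 - a ^ 2 * b ^ 2 + b ^ 4) - a ^ 2 - b ^ 2 := by
  have : (a ^ 2 + b ^ 2) / 2 ≤ √(a ^ 4 - a ^ 2 * b ^ 2 + b ^ 4) :=
    Real.le_sqrt_of_sq_le (by nlinarith [sq_nonneg (a ^ 2 - b ^ 2)])
  linarith

theorem n3_k119_general (a b c : ℝ) (hab : a > b) (hb : b > 0)
    (hc2 : c^2 = a^2 - b^2) :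
    let δ := Real.sqrt (a^4 - a^2*b^2 + b^4)
    let J := Real.sqrt (2*δ - a^2 - b^2) / c^2
    let L := 2*(δ + a^2 + b^2) * J
    ((a^2 + b^2 + δ) / (a*b) ^ ((4:ℝ)/3))^3 = 2*J^3*L/(J*L - 4)^2 := by
  intro δ J L
  have hab0 : 0 < a * b := mul_pos (hb.trans hab) hb
  have hc0 : c ≠ 0 := by
    rintro rfl
    nlinarith
  have hδ : δ ^ 2 = a ^ 4 - a ^ 2 * b ^ 2 + b ^ 4 :=
    Real.sq_sqrt (pow_four_sub_mul_add_pow_four_nonneg a b)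
  have hu : √(2 * δ - a ^ 2 - b ^ 2) ^ 2 = 2 * δ - a ^ 2 - b ^ 2 :=
    Real.sq_sqrt (two_mul_sqrt_pow_four_sub_nonneg a b)
  have hpow : ((a * b) ^ ((4 : ℝ) / 3)) ^ 3 = (a * b) ^ 4 := by
    rw [← Real.rpow_mul_natCast hab0.le]
    norm_num
  rw [div_pow, hpow]
  exact (two_mul_cube_mul_div_sq_eq hδ hu hc2 hc0 hab0.ne').symm

/-- The `N = 3` invariant `k₁₁₉ = (a² + b² + δ)/(ab)^{4/3}` satisfies
`k₁₁₉³ = 2J³L/(JL − 4)²`. -/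
theorem n3_k119 (a b c : ℝ) (hab : a > b) (hb : b > 0)
    (hc : c > 0) (hc2 : c^2 = a^2 - b^2) :
    let δ := Real.sqrt (a^4 - a^2*b^2 + b^4)
    let J := Real.sqrt (2*δ - a^2 - b^2) / c^2
    let L := 2*(δ + a^2 + b^2) * J
    ((a^2 + b^2 + δ) / (a*b) ^ ((4:ℝ)/3))^3 = 2*J^3*L/(J*L - 4)^2 :=
  n3_k119_general a b c hab hb hc2
end

section
/- Let a > b > 0 and let (x₁, y₁) be arbitrary on the ellipse, i.e., (x₁/a)² + (y₁/b)² = 1. Define P₁ = (x₁, y₁), P₂ = (−a⁴y₁, b⁴x₁)/√(b⁶x₁² + a⁶y₁²), P₃ = −P₁, P₄ = −P₂. Then: (i) each Pᵢ lies on the ellipse; (ii) each side PᵢPᵢ₊₁ (indices mod 4) is tangent to the confocal ellipse x²/a''² + y²/b''² = 1 with a'' = a²/√(a²+b²), b'' = b²/√(a²+b²); (iii) the perimeter of P₁P₂P₃P₄ equals 4√(a² + b²). -/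
/-- Point with parameter `t` on the line through `P` and `Q`. -/
def linePt (P Q : ℝ × ℝ) (t : ℝ) : ℝ × ℝ :=
  (P.1 + t*(Q.1 - P.1), P.2 + t*(Q.2 - P.2))

/-- The segment `PQ` is tangent to the curve `onC = 0`: the line through `P, Q`
meets the curve at exactly one point, and that point lies on the segment. -/
def TangentSeg (onC : ℝ × ℝ → Prop) (P Q : ℝ × ℝ) : Prop :=
  ∃ t ∈ Set.Icc (0:ℝ) 1, onC (linePt P Q t) ∧ ∀ s : ℝ, onC (linePt P Q s) → s = t

private lemma tangentSeg_of (a'' b'' : ℝ) (P Q : ℝ × ℝ) (A t : ℝ) (hA : A ≠ 0)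
    (ht0 : 0 ≤ t) (ht1 : t ≤ 1)
    (h : ∀ s : ℝ, ((linePt P Q s).1/a'')^2 + ((linePt P Q s).2/b'')^2 - 1 = A*(s-t)^2) :
    TangentSeg (fun p => (p.1/a'')^2 + (p.2/b'')^2 = 1) P Q := by
  refine ⟨t, ⟨ht0, ht1⟩, ?_, ?_⟩
  · have h1 := h t
    have h2 : A*(t-t)^2 = 0 := by ring
    rw [h2] at h1
    have : ((linePt P Q t).1/a'')^2 + ((linePt P Q t).2/b'')^2 = 1 := by linarith
    exact this
  · intro s hs
    have h2 := h s
    rw [hs] at h2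
    have h4 : A*(s-t)^2 = 0 := by linarith
    rcases mul_eq_zero.mp h4 with h5 | h5
    · exact absurd h5 hA
    · have h6 : s - t = 0 := by
        have := pow_eq_zero_iff (n := 2) (by norm_num) |>.mp h5
        exact this
      linarith

set_option maxHeartbeats 1600000 in
private lemma ident12 (a b x y q r s : ℝ) (ha : a ≠ 0) (hb : b ≠ 0) (hq : q ≠ 0)
    (hr : r ≠ 0) (hD : q^2 + a^4*b^4 ≠ 0)
    (hr2 : r^2 = a^2+b^2) (hq2 : q^2 = b^6*x^2 + a^6*y^2)
    (hE : b^2*x^2 + a^2*y^2 = a^2*b^2) :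
    ((x + s*(-(a^4*y)/q - x)) / (a^2/r))^2 + ((y + s*((b^4*x)/q - y)) / (b^2/r))^2 - 1
    = ((a^2+b^2)*(q^2+a^4*b^4)*(b^4*x^2+a^4*y^2)/(a^4*b^4*q^2))
        * (s - q^2/(q^2+a^4*b^4))^2 := by
  linear_combination (norm := (field_simp; ring))
    ((-1*a^4*b^4*q^4 + a^6*b^8*x^2*q^2 + a^6*b^14*x^4 + a^8*b^6*y^2*q^2 + -2*a^8*b^8*q^2
      + a^8*b^12*x^2*y^2 + -1*a^8*b^14*x^2 + a^10*b^12*x^2 + a^12*b^8*x^2*y^2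
      + a^12*b^10*y^2 + -1*a^12*b^12 + a^14*b^6*y^4 + -1*a^14*b^8*y^2)
        / (a^4*b^4*q^2*(q^2+a^4*b^4)^2)) * hq2
    + ((a^6*b^18*x^4 + a^10*b^16*x^2 + 2*a^12*b^12*x^2*y^2 + a^16*b^10*y^2 + a^18*b^6*y^4)
        / (a^4*b^4*q^2*(q^2+a^4*b^4)^2)) * hE
    + ((b^4*x^2*q^6 + -2*b^4*x^2*q^6*s + b^4*x^2*q^6*s^2 + a^4*y^2*q^6 + -2*a^4*y^2*q^6*s
      + a^4*y^2*q^6*s^2 + 2*a^4*b^8*x^2*q^4 + -4*a^4*b^8*x^2*q^4*s + 3*a^4*b^8*x^2*q^4*s^2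
      + 2*a^8*b^4*y^2*q^4 + -4*a^8*b^4*y^2*q^4*s + 3*a^8*b^4*y^2*q^4*s^2
      + a^8*b^12*x^2*q^2 + -2*a^8*b^12*x^2*q^2*s + 3*a^8*b^12*x^2*q^2*s^2
      + a^12*b^8*y^2*q^2 + -2*a^12*b^8*y^2*q^2*s + 3*a^12*b^8*y^2*q^2*s^2
      + a^12*b^16*x^2*s^2 + a^16*b^12*y^2*s^2)
        / (a^4*b^4*q^2*(q^2+a^4*b^4)^2)) * hr2

set_option maxHeartbeats 1600000 in
private lemma ident23 (a b x y q r s : ℝ) (ha : a ≠ 0) (hb : b ≠ 0) (hq : q ≠ 0)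
    (hr : r ≠ 0) (hD : q^2 + a^4*b^4 ≠ 0)
    (hr2 : r^2 = a^2+b^2) (hq2 : q^2 = b^6*x^2 + a^6*y^2)
    (hE : b^2*x^2 + a^2*y^2 = a^2*b^2) :
    ((-(a^4*y)/q + s*(-x - -(a^4*y)/q)) / (a^2/r))^2
    + (((b^4*x)/q + s*(-y - (b^4*x)/q)) / (b^2/r))^2 - 1
    = ((a^2+b^2)*(q^2+a^4*b^4)*(b^4*x^2+a^4*y^2)/(a^4*b^4*q^2))
        * (s - a^4*b^4/(q^2+a^4*b^4))^2 := by
  linear_combination (norm := (field_simp; ring))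
    ((-1*a^4*b^4*q^4 + a^6*b^8*x^2*q^2 + a^6*b^14*x^4 + a^8*b^6*y^2*q^2 + -2*a^8*b^8*q^2
      + a^8*b^12*x^2*y^2 + -1*a^8*b^14*x^2 + a^10*b^12*x^2 + a^12*b^8*x^2*y^2
      + a^12*b^10*y^2 + -1*a^12*b^12 + a^14*b^6*y^4 + -1*a^14*b^8*y^2)
        / (a^4*b^4*q^2*(q^2+a^4*b^4)^2)) * hq2
    + ((a^6*b^18*x^4 + a^10*b^16*x^2 + 2*a^12*b^12*x^2*y^2 + a^16*b^10*y^2 + a^18*b^6*y^4)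
        / (a^4*b^4*q^2*(q^2+a^4*b^4)^2)) * hE
    + ((b^4*x^2*q^6*s^2 + a^4*y^2*q^6*s^2 + a^4*b^8*x^2*q^4 + -2*a^4*b^8*x^2*q^4*s
      + 3*a^4*b^8*x^2*q^4*s^2 + a^8*b^4*y^2*q^4 + -2*a^8*b^4*y^2*q^4*s
      + 3*a^8*b^4*y^2*q^4*s^2 + 2*a^8*b^12*x^2*q^2 + -4*a^8*b^12*x^2*q^2*s
      + 3*a^8*b^12*x^2*q^2*s^2 + 2*a^12*b^8*y^2*q^2 + -4*a^12*b^8*y^2*q^2*s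
      + 3*a^12*b^8*y^2*q^2*s^2 + a^12*b^16*x^2 + -2*a^12*b^16*x^2*s + a^12*b^16*x^2*s^2
      + a^16*b^12*y^2 + -2*a^16*b^12*y^2*s + a^16*b^12*y^2*s^2)
        / (a^4*b^4*q^2*(q^2+a^4*b^4)^2)) * hr2

set_option maxHeartbeats 800000 in
private lemma identd (a b x y q r : ℝ) (ha : a ≠ 0) (hb : b ≠ 0) (hq : q ≠ 0)
    (hr : r ≠ 0)
    (hr2 : r^2 = a^2+b^2) (hq2 : q^2 = b^6*x^2 + a^6*y^2)
    (hE : b^2*x^2 + a^2*y^2 = a^2*b^2) :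
    (x - -(a^4*y)/q)^2 + (y - (b^4*x)/q)^2 = (r + x*y*(a^4-b^4)/(q*r))^2 := by
  linear_combination (norm := (field_simp; ring))
    ((b^2*y^2 + b^2*x^2 + -1*b^4 + a^2*y^2 + a^2*x^2 + -2*a^2*b^2 + -1*a^4)/(q^2*r^2)) * hq2
    + ((b^6*x^2 + a^2*b^4*x^2 + a^4*b^2*y^2 + a^6*y^2)/(q^2*r^2)) * hE
    + ((-1*q^2*r^2 + y^2*q^2 + x^2*q^2 + -1*b^2*q^2 + b^8*x^2 + -1*a^2*q^2 + a^8*y^2)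
        /(q^2*r^2)) * hr2

set_option maxHeartbeats 800000 in
private lemma identd2 (a b x y q r : ℝ) (ha : a ≠ 0) (hb : b ≠ 0) (hq : q ≠ 0)
    (hr : r ≠ 0)
    (hr2 : r^2 = a^2+b^2) (hq2 : q^2 = b^6*x^2 + a^6*y^2)
    (hE : b^2*x^2 + a^2*y^2 = a^2*b^2) :
    (-(a^4*y)/q - -x)^2 + ((b^4*x)/q - -y)^2 = (r - x*y*(a^4-b^4)/(q*r))^2 := by
  linear_combination (norm := (field_simp; ring))
    ((b^2*y^2 + b^2*x^2 + -1*b^4 + a^2*y^2 + a^2*x^2 + -2*a^2*b^2 + -1*a^4)/(q^2*r^2)) * hq2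
    + ((b^6*x^2 + a^2*b^4*x^2 + a^4*b^2*y^2 + a^6*y^2)/(q^2*r^2)) * hE
    + ((-1*q^2*r^2 + y^2*q^2 + x^2*q^2 + -1*b^2*q^2 + b^8*x^2 + -1*a^2*q^2 + a^8*y^2)
        /(q^2*r^2)) * hr2

set_option maxHeartbeats 3200000 in
/-- Simple billiard 4-periodics: the four vertices lie on the ellipse, each side
is tangent to the confocal caustic with semi-axes `a'' = a²/√(a²+b²)`,
`b'' = b²/√(a²+b²)`, and the perimeter is `4√(a²+b²)`. -/
theorem simple_4periodic (a b x₁ y₁ : ℝ) (hab : a > b) (hb : b > 0)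
    (hP1 : (x₁/a)^2 + (y₁/b)^2 = 1) :
    let q := Real.sqrt (b^6*x₁^2 + a^6*y₁^2)
    let P1 : ℝ × ℝ := (x₁, y₁)
    let P2 : ℝ × ℝ := (-(a^4*y₁)/q, (b^4*x₁)/q)
    let P3 : ℝ × ℝ := (-x₁, -y₁)
    let P4 : ℝ × ℝ := ((a^4*y₁)/q, -(b^4*x₁)/q)
    let a'' := a^2 / Real.sqrt (a^2 + b^2)
    let b'' := b^2 / Real.sqrt (a^2 + b^2)
    let onE : ℝ × ℝ → Prop := fun p => (p.1/a)^2 + (p.2/b)^2 = 1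
    let onCaustic : ℝ × ℝ → Prop := fun p => (p.1/a'')^2 + (p.2/b'')^2 = 1
    (onE P1 ∧ onE P2 ∧ onE P3 ∧ onE P4) ∧
    (TangentSeg onCaustic P1 P2 ∧ TangentSeg onCaustic P2 P3 ∧
      TangentSeg onCaustic P3 P4 ∧ TangentSeg onCaustic P4 P1) ∧
    edist' P1 P2 + edist' P2 P3 + edist' P3 P4 + edist' P4 P1 =
      4 * Real.sqrt (a^2 + b^2) := by
  intro q P1 P2 P3 P4 a'' b'' onE onCaustic
  have ha : (0:ℝ) < a := lt_trans hb hab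
  have ha' : a ≠ 0 := ne_of_gt ha
  have hb' : b ≠ 0 := ne_of_gt hb
  have hE : b^2*x₁^2 + a^2*y₁^2 = a^2*b^2 := by
    field_simp at hP1; linarith
  have hab2 : b^2 < a^2 := by nlinarith
  have hab4 : b^4 ≤ a^4 := by nlinarith
  have haux1 : (0:ℝ) ≤ a^2*y₁^2*(a^4-b^4) :=
    mul_nonneg (by positivity) (by linarith)
  have haux2 : (0:ℝ) ≤ a^2*y₁^2*(a^2-b^2) :=
    mul_nonneg (by positivity) (by linarith)
  have haux3 : (0:ℝ) < a^2*b^6 := by positivity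
  have haux4 : (0:ℝ) < a^2*b^4 := by positivity
  have hQpos : (0:ℝ) < b^6*x₁^2 + a^6*y₁^2 := by nlinarith [haux1, haux3, hE]
  have hq0 : (0:ℝ) < q := Real.sqrt_pos.mpr hQpos
  have hq' : q ≠ 0 := ne_of_gt hq0
  have hq2 : q^2 = b^6*x₁^2 + a^6*y₁^2 := Real.sq_sqrt (le_of_lt hQpos)
  clear_value q
  set r := Real.sqrt (a^2 + b^2) with hrdef
  have hr0 : (0:ℝ) < r := Real.sqrt_pos.mpr (by positivity)
  have hr' : r ≠ 0 := ne_of_gt hr0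
  have hr2 : r^2 = a^2 + b^2 := Real.sq_sqrt (by positivity)
  have hD : q^2 + a^4*b^4 ≠ 0 := by positivity
  have hBpos : (0:ℝ) < b^4*x₁^2 + a^4*y₁^2 := by nlinarith [haux2, haux4, hE]
  have hApos : (0:ℝ) < (a^2+b^2)*(q^2+a^4*b^4)*(b^4*x₁^2+a^4*y₁^2)/(a^4*b^4*q^2) := by
    positivity
  have hA : ((a^2+b^2)*(q^2+a^4*b^4)*(b^4*x₁^2+a^4*y₁^2)/(a^4*b^4*q^2)) ≠ 0 :=
    ne_of_gt hApos
  have hBpos' : (0:ℝ) < b^4*(-x₁)^2 + a^4*(-y₁)^2 := by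
    simpa using hBpos
  have hA' : ((a^2+b^2)*(q^2+a^4*b^4)*(b^4*(-x₁)^2+a^4*(-y₁)^2)/(a^4*b^4*q^2)) ≠ 0 := by
    have : (0:ℝ) < (a^2+b^2)*(q^2+a^4*b^4)*(b^4*(-x₁)^2+a^4*(-y₁)^2)/(a^4*b^4*q^2) := by
      positivity
    exact ne_of_gt this
  have hq2n : q^2 = b^6*(-x₁)^2 + a^6*(-y₁)^2 := by linear_combination hq2
  have hEn : b^2*(-x₁)^2 + a^2*(-y₁)^2 = a^2*b^2 := by linear_combination hE
  -- parameters of tangency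
  have ht12a : (0:ℝ) ≤ q^2/(q^2+a^4*b^4) := by positivity
  have ht12b : q^2/(q^2+a^4*b^4) ≤ 1 := by
    rw [div_le_one (by positivity)]; nlinarith
  have ht23a : (0:ℝ) ≤ a^4*b^4/(q^2+a^4*b^4) := by positivity
  have ht23b : a^4*b^4/(q^2+a^4*b^4) ≤ 1 := by
    rw [div_le_one (by positivity)]; nlinarith
  refine ⟨⟨?_, ?_, ?_, ?_⟩, ⟨?_, ?_, ?_, ?_⟩, ?_⟩
  · exact hP1
  · show ((-(a^4*y₁)/q)/a)^2 + (((b^4*x₁)/q)/b)^2 = 1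
    linear_combination (norm := (field_simp; ring)) (-1/q^2) * hq2
  · show ((-x₁)/a)^2 + ((-y₁)/b)^2 = 1
    linear_combination hP1
  · show (((a^4*y₁)/q)/a)^2 + ((-(b^4*x₁)/q)/b)^2 = 1
    linear_combination (norm := (field_simp; ring)) (-1/q^2) * hq2
  -- tangency of the four sides
  · refine tangentSeg_of a'' b'' P1 P2 _ _ hA ht12a ht12b ?_
    intro s
    show ((x₁ + s*(-(a^4*y₁)/q - x₁)) / (a^2/r))^2
      + ((y₁ + s*((b^4*x₁)/q - y₁)) / (b^2/r))^2 - 1 = _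
    exact ident12 a b x₁ y₁ q r s ha' hb' hq' hr' hD hr2 hq2 hE
  · refine tangentSeg_of a'' b'' P2 P3 _ _ hA ht23a ht23b ?_
    intro s
    show ((-(a^4*y₁)/q + s*(-x₁ - -(a^4*y₁)/q)) / (a^2/r))^2
      + (((b^4*x₁)/q + s*(-y₁ - (b^4*x₁)/q)) / (b^2/r))^2 - 1 = _
    exact ident23 a b x₁ y₁ q r s ha' hb' hq' hr' hD hr2 hq2 hE
  · refine tangentSeg_of a'' b'' P3 P4 _ _ hA' ht12a ht12b ?_
    intro s
    show ((-x₁ + s*((a^4*y₁)/q - -x₁)) / (a^2/r))^2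
      + ((-y₁ + s*(-(b^4*x₁)/q - -y₁)) / (b^2/r))^2 - 1 = _
    have H := ident12 a b (-x₁) (-y₁) q r s ha' hb' hq' hr' hD hr2 hq2n hEn
    linear_combination H
  · refine tangentSeg_of a'' b'' P4 P1 _ _ hA' ht23a ht23b ?_
    intro s
    show (((a^4*y₁)/q + s*(x₁ - (a^4*y₁)/q)) / (a^2/r))^2
      + ((-(b^4*x₁)/q + s*(y₁ - -(b^4*x₁)/q)) / (b^2/r))^2 - 1 = _
    have H := ident23 a b (-x₁) (-y₁) q r s ha' hb' hq' hr' hD hr2 hq2n hEn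
    linear_combination H
  -- perimeter
  · have hw1 : (a^2-b^2)^2*(x₁*y₁)^2 ≤ q^2 := by
      have key : a^2*b^2*q^2 = (a^2-b^2)^2*a^2*b^2*(x₁*y₁)^2 + (b^4*x₁^2+a^4*y₁^2)^2 := by
        linear_combination (a^2*b^2) * hq2 + (-(b^6*x₁^2) - a^6*y₁^2) * hE
      nlinarith [sq_nonneg (b^4*x₁^2+a^4*y₁^2), mul_pos ha hb, sq_nonneg (a*b)]
    have hw2 : (a^2-b^2)*(x₁*y₁) ≤ q := by nlinarith [hq0, hw1]
    have hw3 : -q ≤ (a^2-b^2)*(x₁*y₁) := by nlinarith [hq0, hw1]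
    set k := x₁*y₁*(a^4-b^4)/(q*r) with hkdef
    have hkl : -r ≤ k := by
      rw [hkdef, le_div_iff₀ (by positivity)]
      nlinarith [mul_le_mul_of_nonneg_left hw3 (show (0:ℝ) ≤ a^2+b^2 by positivity), hr2,
        mul_pos hq0 hr0]
    have hku : k ≤ r := by
      rw [hkdef, div_le_iff₀ (by positivity)]
      nlinarith [mul_le_mul_of_nonneg_left hw2 (show (0:ℝ) ≤ a^2+b^2 by positivity), hr2,
        mul_pos hq0 hr0]
    have e12 : edist' P1 P2 = r + k := by
      show Real.sqrt ((x₁ - -(a^4*y₁)/q)^2 + (y₁ - (b^4*x₁)/q)^2) = r + k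
      rw [identd a b x₁ y₁ q r ha' hb' hq' hr' hr2 hq2 hE]
      exact Real.sqrt_sq (by linarith)
    have e23 : edist' P2 P3 = r - k := by
      show Real.sqrt ((-(a^4*y₁)/q - -x₁)^2 + ((b^4*x₁)/q - -y₁)^2) = r - k
      rw [identd2 a b x₁ y₁ q r ha' hb' hq' hr' hr2 hq2 hE]
      exact Real.sqrt_sq (by linarith)
    have e34 : edist' P3 P4 = r + k := by
      show Real.sqrt ((-x₁ - (a^4*y₁)/q)^2 + (-y₁ - -(b^4*x₁)/q)^2) = r + k
      have harg : (-x₁ - (a^4*y₁)/q)^2 + (-y₁ - -(b^4*x₁)/q)^2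
          = (x₁ - -(a^4*y₁)/q)^2 + (y₁ - (b^4*x₁)/q)^2 := by ring
      rw [harg, identd a b x₁ y₁ q r ha' hb' hq' hr' hr2 hq2 hE]
      exact Real.sqrt_sq (by linarith)
    have e41 : edist' P4 P1 = r - k := by
      show Real.sqrt (((a^4*y₁)/q - x₁)^2 + (-(b^4*x₁)/q - y₁)^2) = r - k
      have harg : ((a^4*y₁)/q - x₁)^2 + (-(b^4*x₁)/q - y₁)^2
          = (-(a^4*y₁)/q - -x₁)^2 + ((b^4*x₁)/q - -y₁)^2 := by ring
      rw [harg, identd2 a b x₁ y₁ q r ha' hb' hq' hr' hr2 hq2 hE]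
      exact Real.sqrt_sq (by linarith)
    rw [e12, e23, e34, e41]
    ring
end

section
/- Let a > b > 0 and let P₁ = (x₁, y₁), P₂ = (−a⁴y₁, b⁴x₁)/√(b⁶x₁² + a⁶y₁²), P₃ = −P₁, P₄ = −P₂ be a simple billiard 4-periodic in the ellipse x²/a² + y²/b² = 1. The outer polygon, whose vertices are the intersections of consecutive tangent lines to the ellipse at P₁, …, P₄, is a rectangle; consequently the sum of cos(2θᵢ') over its four interior angles θᵢ' equals −4, and the product ∏ cos θᵢ' equals 0. -/
/-- `q` lies on the tangent line to the ellipse `x²/a² + y²/b² = 1` at the point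
`p` of the ellipse. -/
def OnTangentLine (a b : ℝ) (p q : ℝ × ℝ) : Prop :=
  q.1 * p.1 / a^2 + q.2 * p.2 / b^2 = 1

/-- Dot product of the vectors `B → A` and `B → C`. -/
def dotAt (A B C : ℝ × ℝ) : ℝ :=
  (A.1 - B.1)*(C.1 - B.1) + (A.2 - B.2)*(C.2 - B.2)

/-- Interior angle at `B` of the path `A-B-C`. -/
noncomputable def ang (A B C : ℝ × ℝ) : ℝ :=
  Real.arccos (dotAt A B C /
    (Real.sqrt ((A.1 - B.1)^2 + (A.2 - B.2)^2) *
     Real.sqrt ((C.1 - B.1)^2 + (C.2 - B.2)^2)))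

/-!
The tangent line at `p` is `{q | q · n(p) = 1}` with normal `n(p) = (p₁/a², p₂/b²)`.
For consecutive vertices of the 4-periodic these normals are orthogonal, e.g.
`n(P₁) · n(P₂) = (-x₁y₁ + x₁y₁)/q = 0`, so consecutive tangent lines are perpendicular and
every angle of the outer polygon is `π/2`.
-/

noncomputable def ellipseNormal (a b : ℝ) (p : ℝ × ℝ) : ℝ × ℝ := (p.1 / a^2, p.2 / b^2)

def TangentsPerpendicular (a b : ℝ) (p r : ℝ × ℝ) : Prop :=
  (ellipseNormal a b p).1 * (ellipseNormal a b r).1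
    + (ellipseNormal a b p).2 * (ellipseNormal a b r).2 = 0

lemma sq_add_sq_ne_zero_of_ne_zero {v : ℝ × ℝ} (hv : v ≠ 0) : v.1 ^ 2 + v.2 ^ 2 ≠ 0 := by
  contrapose! hv
  have h₁ : v.1 = 0 := by nlinarith [sq_nonneg v.1, sq_nonneg v.2]
  have h₂ : v.2 = 0 := by nlinarith [sq_nonneg v.1, sq_nonneg v.2]
  exact Prod.ext h₁ h₂

lemma orthogonal_of_orthogonal_normals {u v n m : ℝ × ℝ} (hn : n ≠ 0) (hm : m ≠ 0)
    (hnm : n.1 * m.1 + n.2 * m.2 = 0)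
    (hu : u.1 * n.1 + u.2 * n.2 = 0)
    (hv : v.1 * m.1 + v.2 * m.2 = 0) :
    u.1 * v.1 + u.2 * v.2 = 0 := by
  -- `|n|² u = (u · n) n + (n × u) n^⊥`, and similarly for `v`, `m`
  have key : (u.1 * v.1 + u.2 * v.2) * ((n.1 ^ 2 + n.2 ^ 2) * (m.1 ^ 2 + m.2 ^ 2)) = 0 := by
    linear_combination
      ((v.1 * m.1 + v.2 * m.2) * (n.1 * m.1 + n.2 * m.2)
        + (m.1 * v.2 - m.2 * v.1) * (n.2 * m.1 - n.1 * m.2)) * hu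
      + (n.1 * u.2 - n.2 * u.1) * (n.1 * m.2 - n.2 * m.1) * hv
      + (n.1 * u.2 - n.2 * u.1) * (m.1 * v.2 - m.2 * v.1) * hnm
  exact (mul_eq_zero.mp key).resolve_right
    (mul_ne_zero (sq_add_sq_ne_zero_of_ne_zero hn) (sq_add_sq_ne_zero_of_ne_zero hm))

section TangentLines

variable {a b : ℝ} {p r A B C : ℝ × ℝ}

lemma ellipseNormal_ne_zero_of_onTangentLine (h : OnTangentLine a b p A) :
    ellipseNormal a b p ≠ 0 := by
  intro hn
  have h₁ : p.1 / a^2 = 0 := congrArg Prod.fst hn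
  have h₂ : p.2 / b^2 = 0 := congrArg Prod.snd hn
  rw [OnTangentLine, mul_div_assoc, mul_div_assoc, h₁, h₂] at h
  norm_num at h

lemma sub_dot_ellipseNormal_eq_zero (hA : OnTangentLine a b p A) (hB : OnTangentLine a b p B) :
    (A - B).1 * (ellipseNormal a b p).1 + (A - B).2 * (ellipseNormal a b p).2 = 0 := by
  unfold OnTangentLine at hA hB
  simp only [ellipseNormal, Prod.fst_sub, Prod.snd_sub]
  linear_combination hA - hB

lemma dotAt_eq_zero_of_orthogonal_tangents (hA : OnTangentLine a b p A)
    (hBp : OnTangentLine a b p B) (hBr : OnTangentLine a b r B) (hC : OnTangentLine a b r C)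
    (hpr : TangentsPerpendicular a b p r) :
    dotAt A B C = 0 :=
  orthogonal_of_orthogonal_normals (ellipseNormal_ne_zero_of_onTangentLine hA)
    (ellipseNormal_ne_zero_of_onTangentLine hC) hpr
    (sub_dot_ellipseNormal_eq_zero hA hBp) (sub_dot_ellipseNormal_eq_zero hC hBr)

end TangentLines

lemma ang_eq_pi_div_two_of_dotAt_eq_zero {A B C : ℝ × ℝ} (h : dotAt A B C = 0) :
    ang A B C = Real.pi / 2 := by
  rw [ang, h, zero_div, Real.arccos_zero]

theorem simple_4periodic_outer_rectangle_general (a b x₁ y₁ : ℝ) (hab : a > b)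
    (hb : b > 0) (Q1 Q2 Q3 Q4 : ℝ × ℝ) :
    let q := Real.sqrt (b^6*x₁^2 + a^6*y₁^2)
    let P1 : ℝ × ℝ := (x₁, y₁)
    let P2 : ℝ × ℝ := (-(a^4*y₁)/q, (b^4*x₁)/q)
    let P3 : ℝ × ℝ := (-x₁, -y₁)
    let P4 : ℝ × ℝ := ((a^4*y₁)/q, -(b^4*x₁)/q)
    OnTangentLine a b P1 Q1 → OnTangentLine a b P2 Q1 →
    OnTangentLine a b P2 Q2 → OnTangentLine a b P3 Q2 →
    OnTangentLine a b P3 Q3 → OnTangentLine a b P4 Q3 →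
    OnTangentLine a b P4 Q4 → OnTangentLine a b P1 Q4 →
    let θ₁ := ang Q4 Q1 Q2
    let θ₂ := ang Q1 Q2 Q3
    let θ₃ := ang Q2 Q3 Q4
    let θ₄ := ang Q3 Q4 Q1
    -- the outer polygon is a rectangle: adjacent sides are orthogonal
    (dotAt Q4 Q1 Q2 = 0 ∧ dotAt Q1 Q2 Q3 = 0 ∧
     dotAt Q2 Q3 Q4 = 0 ∧ dotAt Q3 Q4 Q1 = 0) ∧
    Real.cos (2*θ₁) + Real.cos (2*θ₂) + Real.cos (2*θ₃) + Real.cos (2*θ₄) = -4 ∧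
    Real.cos θ₁ * Real.cos θ₂ * Real.cos θ₃ * Real.cos θ₄ = 0 := by
  intro q P1 P2 P3 P4 h1 h2 h3 h4 h5 h6 h7 h8 θ₁ θ₂ θ₃ θ₄
  have ha : a ≠ 0 := (hb.trans hab).ne'
  have hb₀ : b ≠ 0 := hb.ne'
  have hperp : TangentsPerpendicular a b P1 P2 ∧ TangentsPerpendicular a b P2 P3 ∧
      TangentsPerpendicular a b P3 P4 ∧ TangentsPerpendicular a b P4 P1 := by
    refine ⟨?_, ?_, ?_, ?_⟩ <;>
      · simp only [TangentsPerpendicular, ellipseNormal, P1, P2, P3, P4]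
        field_simp
        ring
  obtain ⟨h12, h23, h34, h41⟩ := hperp
  have hrect : dotAt Q4 Q1 Q2 = 0 ∧ dotAt Q1 Q2 Q3 = 0 ∧
      dotAt Q2 Q3 Q4 = 0 ∧ dotAt Q3 Q4 Q1 = 0 :=
    ⟨dotAt_eq_zero_of_orthogonal_tangents h8 h1 h2 h3 h12,
      dotAt_eq_zero_of_orthogonal_tangents h2 h3 h4 h5 h23,
      dotAt_eq_zero_of_orthogonal_tangents h4 h5 h6 h7 h34,
      dotAt_eq_zero_of_orthogonal_tangents h6 h7 h8 h1 h41⟩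
  have hθ₁ : θ₁ = Real.pi / 2 := ang_eq_pi_div_two_of_dotAt_eq_zero hrect.1
  have hθ₂ : θ₂ = Real.pi / 2 := ang_eq_pi_div_two_of_dotAt_eq_zero hrect.2.1
  have hθ₃ : θ₃ = Real.pi / 2 := ang_eq_pi_div_two_of_dotAt_eq_zero hrect.2.2.1
  have hθ₄ : θ₄ = Real.pi / 2 := ang_eq_pi_div_two_of_dotAt_eq_zero hrect.2.2.2
  refine ⟨hrect, ?_, ?_⟩
  · rw [hθ₁, hθ₂, hθ₃, hθ₄, mul_div_cancel₀ _ two_ne_zero, Real.cos_pi]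
    norm_num
  · rw [hθ₁, Real.cos_pi_div_two]
    ring

/-- The outer polygon of a simple billiard 4-periodic is a rectangle; hence the
sum of `cos(2θᵢ')` over its four interior angles is `−4` and the product of
`cos θᵢ'` is `0`. -/
theorem simple_4periodic_outer_rectangle (a b x₁ y₁ : ℝ) (hab : a > b)
    (hb : b > 0) (hP1 : (x₁/a)^2 + (y₁/b)^2 = 1) (Q1 Q2 Q3 Q4 : ℝ × ℝ) :
    let q := Real.sqrt (b^6*x₁^2 + a^6*y₁^2)
    let P1 : ℝ × ℝ := (x₁, y₁)
    let P2 : ℝ × ℝ := (-(a^4*y₁)/q, (b^4*x₁)/q)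
    let P3 : ℝ × ℝ := (-x₁, -y₁)
    let P4 : ℝ × ℝ := ((a^4*y₁)/q, -(b^4*x₁)/q)
    OnTangentLine a b P1 Q1 → OnTangentLine a b P2 Q1 →
    OnTangentLine a b P2 Q2 → OnTangentLine a b P3 Q2 →
    OnTangentLine a b P3 Q3 → OnTangentLine a b P4 Q3 →
    OnTangentLine a b P4 Q4 → OnTangentLine a b P1 Q4 →
    let θ₁ := ang Q4 Q1 Q2
    let θ₂ := ang Q1 Q2 Q3
    let θ₃ := ang Q2 Q3 Q4
    let θ₄ := ang Q3 Q4 Q1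
    -- the outer polygon is a rectangle: adjacent sides are orthogonal
    (dotAt Q4 Q1 Q2 = 0 ∧ dotAt Q1 Q2 Q3 = 0 ∧
     dotAt Q2 Q3 Q4 = 0 ∧ dotAt Q3 Q4 Q1 = 0) ∧
    Real.cos (2*θ₁) + Real.cos (2*θ₂) + Real.cos (2*θ₃) + Real.cos (2*θ₄) = -4 ∧
    Real.cos θ₁ * Real.cos θ₂ * Real.cos θ₃ * Real.cos θ₄ = 0 :=
  simple_4periodic_outer_rectangle_general a b x₁ y₁ hab hb Q1 Q2 Q3 Q4
end

section
/- Let a > b > 0. Define the six points P₁ = (a, 0), P₂ = (a²/(a+b), b√(b(2a+b))/(a+b)), P₃ = (−a²/(a+b), b√(b(2a+b))/(a+b)), P₄ = (−a, 0), P₅ = −P₂, P₆ = −P₃. Then each Pᵢ lies on the ellipse x²/a² + y²/b² = 1, each side PᵢPᵢ₊₁ (indices mod 6) is tangent to the confocal ellipse with semi-axes a'' = a√(a(a+2b))/(a+b), b'' = b√(b(2a+b))/(a+b), and the perimeter of the hexagon equals 4(a² + ab + b²)/(a + b). -/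
def OnEllipse (α β : ℝ) (p : ℝ × ℝ) : Prop :=
  (p.1 / α) ^ 2 + (p.2 / β) ^ 2 = 1

lemma onEllipse_congr {α β : ℝ} {p q : ℝ × ℝ} (h₁ : p.1 ^ 2 = q.1 ^ 2) (h₂ : p.2 ^ 2 = q.2 ^ 2) :
    OnEllipse α β p ↔ OnEllipse α β q := by
  simp only [OnEllipse, div_pow, h₁, h₂]

/-- Along `T + s • d` the equation of the ellipse reads `1 + 2 s ⟨T, d⟩ + s² ‖d‖² = 1` in the
ellipse's own inner product, so orthogonality of `d` to `T` leaves only `s = 0`. -/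
lemma onEllipse_add_smul_iff {α β : ℝ} (hα : α ≠ 0) (hβ : β ≠ 0) {T d : ℝ × ℝ}
    (hT : OnEllipse α β T) (hd : d ≠ 0) (horth : T.1 / α * (d.1 / α) + T.2 / β * (d.2 / β) = 0)
    (s : ℝ) : OnEllipse α β (T + s • d) ↔ s = 0 := by
  have hnorm : 0 < (d.1 / α) ^ 2 + (d.2 / β) ^ 2 := by
    by_contra! h
    have h₁ : d.1 / α = 0 := by nlinarith [sq_nonneg (d.1 / α), sq_nonneg (d.2 / β)]
    have h₂ : d.2 / β = 0 := by nlinarith [sq_nonneg (d.1 / α), sq_nonneg (d.2 / β)]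
    exact hd (Prod.ext ((div_eq_zero_iff.mp h₁).resolve_right hα)
      ((div_eq_zero_iff.mp h₂).resolve_right hβ))
  unfold OnEllipse at hT ⊢
  simp only [Prod.fst_add, Prod.snd_add, Prod.smul_fst, Prod.smul_snd, smul_eq_mul]
  have hexpand : ((T.1 + s * d.1) / α) ^ 2 + ((T.2 + s * d.2) / β) ^ 2
      = 1 + s ^ 2 * ((d.1 / α) ^ 2 + (d.2 / β) ^ 2) := by
    linear_combination hT + 2 * s * horth
  rw [hexpand, add_eq_left, mul_eq_zero, or_iff_left hnorm.ne', pow_eq_zero_iff two_ne_zero]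

lemma linePt_eq_add_smul (P Q : ℝ × ℝ) (s t : ℝ) :
    linePt P Q s = linePt P Q t + (s - t) • (Q - P) := by
  ext <;> simp only [linePt, Prod.fst_add, Prod.snd_add, Prod.smul_fst, Prod.smul_snd,
    Prod.fst_sub, Prod.snd_sub, smul_eq_mul] <;> ring

lemma tangentSeg_onEllipse {α β : ℝ} (hα : α ≠ 0) (hβ : β ≠ 0) {P Q : ℝ × ℝ} (hPQ : P ≠ Q)
    {t : ℝ} (ht : t ∈ Set.Icc (0 : ℝ) 1) (hT : OnEllipse α β (linePt P Q t))
    (horth : (linePt P Q t).1 / α * ((Q.1 - P.1) / α)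
      + (linePt P Q t).2 / β * ((Q.2 - P.2) / β) = 0) :
    TangentSeg (OnEllipse α β) P Q := by
  refine ⟨t, ht, hT, fun s hs => ?_⟩
  rw [linePt_eq_add_smul P Q s t,
    onEllipse_add_smul_iff hα hβ hT (sub_ne_zero.mpr hPQ.symm) horth] at hs
  linarith

lemma TangentSeg.symm {C : ℝ × ℝ → Prop} {P Q : ℝ × ℝ} (h : TangentSeg C P Q) :
    TangentSeg C Q P := by
  obtain ⟨t, ⟨ht₀, ht₁⟩, hon, huniq⟩ := h
  have hrev : ∀ u, linePt Q P u = linePt P Q (1 - u) := fun u => by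
    ext <;> simp only [linePt] <;> ring
  refine ⟨1 - t, ⟨by linarith, by linarith⟩, by rwa [hrev, sub_sub_cancel], fun s hs => ?_⟩
  rw [hrev] at hs
  linarith [huniq _ hs]

lemma linePt_eq_lineMap (P Q : ℝ × ℝ) (t : ℝ) : linePt P Q t = AffineMap.lineMap P Q t := by
  ext <;> simp only [linePt, AffineMap.lineMap_apply, Prod.fst_add, Prod.snd_add,
    Prod.smul_fst, Prod.smul_snd, vsub_eq_sub, Prod.fst_sub, Prod.snd_sub, vadd_eq_add,
    smul_eq_mul] <;> ring

lemma TangentSeg.map {C : ℝ × ℝ → Prop} {P Q : ℝ × ℝ} (f : ℝ × ℝ →ᵃ[ℝ] ℝ × ℝ)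
    (hf : ∀ p, C (f p) ↔ C p) (h : TangentSeg C P Q) : TangentSeg C (f P) (f Q) := by
  obtain ⟨t, ht, hon, huniq⟩ := h
  refine ⟨t, ht, ?_, fun s hs => huniq s ?_⟩
  · rwa [linePt_eq_lineMap, ← AffineMap.apply_lineMap, hf, ← linePt_eq_lineMap]
  · rwa [linePt_eq_lineMap, ← AffineMap.apply_lineMap, hf, ← linePt_eq_lineMap] at hs

section SymmetricHexagon

variable {c x y : ℝ}

lemma onEllipse_symmHexagon {α β : ℝ} (hα : α ≠ 0) (h : OnEllipse α β (x, y)) :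
    OnEllipse α β (α, 0) ∧ OnEllipse α β (x, y) ∧ OnEllipse α β (-x, y) ∧
      OnEllipse α β (-α, 0) ∧ OnEllipse α β (-x, -y) ∧ OnEllipse α β (x, -y) := by
  have hvertex : OnEllipse α β (α, 0) := by simp [OnEllipse, hα]
  exact ⟨hvertex, h, (onEllipse_congr (by ring) (by ring)).mpr h,
    (onEllipse_congr (by ring) (by ring)).mpr hvertex, (onEllipse_congr (by ring) (by ring)).mpr h,
    (onEllipse_congr (by ring) (by ring)).mpr h⟩

lemma TangentSeg.symmHexagon {C : ℝ × ℝ → Prop}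
    (hC : ∀ p q : ℝ × ℝ, p.1 ^ 2 = q.1 ^ 2 → p.2 ^ 2 = q.2 ^ 2 → (C p ↔ C q))
    (h₁₂ : TangentSeg C (c, 0) (x, y)) (h₂₃ : TangentSeg C (x, y) (-x, y)) :
    TangentSeg C (c, 0) (x, y) ∧ TangentSeg C (x, y) (-x, y) ∧ TangentSeg C (-x, y) (-c, 0) ∧
      TangentSeg C (-c, 0) (-x, -y) ∧ TangentSeg C (-x, -y) (x, -y) ∧
      TangentSeg C (x, -y) (c, 0) := by
  let reflectX : ℝ × ℝ →ᵃ[ℝ] ℝ × ℝ := (LinearMap.id.prodMap (-LinearMap.id)).toAffineMap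
  let reflectY : ℝ × ℝ →ᵃ[ℝ] ℝ × ℝ := ((-LinearMap.id).prodMap LinearMap.id).toAffineMap
  let neg : ℝ × ℝ →ᵃ[ℝ] ℝ × ℝ := (-LinearMap.id).toAffineMap
  have hX := h₁₂.map reflectX fun p => hC _ _ (by simp [reflectX]) (by simp [reflectX])
  have hY := h₁₂.map reflectY fun p => hC _ _ (by simp [reflectY]) (by simp [reflectY])
  have hN₁ := h₁₂.map neg fun p => hC _ _ (by simp [neg]) (by simp [neg])
  have hN₂ := h₂₃.map neg fun p => hC _ _ (by simp [neg]) (by simp [neg])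
  simp only [reflectX, reflectY, neg, LinearMap.coe_toAffineMap, LinearMap.prodMap_apply,
    LinearMap.id_apply, LinearMap.neg_apply, Prod.neg_mk, neg_zero, neg_neg] at hX hY hN₁ hN₂
  exact ⟨h₁₂, h₂₃, hY.symm, hN₁, hN₂, hX.symm⟩

lemma edist'_congr {p q p' q' : ℝ × ℝ} (h₁ : (p.1 - q.1) ^ 2 = (p'.1 - q'.1) ^ 2)
    (h₂ : (p.2 - q.2) ^ 2 = (p'.2 - q'.2) ^ 2) : edist' p q = edist' p' q' := by
  rw [edist', edist', h₁, h₂]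

lemma perimeter_symmHexagon :
    edist' (c, 0) (x, y) + edist' (x, y) (-x, y) + edist' (-x, y) (-c, 0) +
      edist' (-c, 0) (-x, -y) + edist' (-x, -y) (x, -y) + edist' (x, -y) (c, 0)
      = 4 * edist' (c, 0) (x, y) + 4 * |x| := by
  have htop : ∀ u v, edist' (u, v) (-u, v) = 2 * |u| := fun u v => by
    rw [edist', sub_self, zero_pow two_ne_zero, add_zero, sub_neg_eq_add, ← two_mul,
      Real.sqrt_sq_eq_abs, abs_mul, abs_two]
  have h₃₄ : edist' (-x, y) (-c, 0) = edist' (c, 0) (x, y) := edist'_congr (by ring) (by ring)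
  have h₄₅ : edist' (-c, 0) (-x, -y) = edist' (c, 0) (x, y) := edist'_congr (by ring) (by ring)
  have h₅₆ : edist' (-x, -y) (x, -y) = edist' (x, y) (-x, y) := edist'_congr (by ring) (by ring)
  have h₆₁ : edist' (x, -y) (c, 0) = edist' (c, 0) (x, y) := edist'_congr (by ring) (by ring)
  rw [h₃₄, h₄₅, h₅₆, h₆₁, htop]
  ring

end SymmetricHexagon

section Hexagon

variable {a b r s : ℝ} (ha : 0 < a) (hb : 0 < b)
include ha hb

lemma onEllipse_vertex (hs : s ^ 2 = b * (2 * a + b)) :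
    OnEllipse a b (a ^ 2 / (a + b), b * s / (a + b)) := by
  unfold OnEllipse
  field_simp
  linear_combination hs

lemma edist'_vertex (hs : s ^ 2 = b * (2 * a + b)) :
    edist' (a, 0) (a ^ 2 / (a + b), b * s / (a + b)) = b := by
  have hsq : (a - a ^ 2 / (a + b)) ^ 2 + (0 - b * s / (a + b)) ^ 2 = b ^ 2 := by
    field_simp
    linear_combination b ^ 2 * hs
  rw [edist', hsq, Real.sqrt_sq hb.le]

variable (hr₀ : 0 < r) (hs₀ : 0 < s)
include hr₀ hs₀

/-- The point of contact has normalized coordinates `(r / (a + b), b / (a + b))`. -/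
lemma caustic_tangentSeg_right (hr : r ^ 2 = a * (a + 2 * b)) :
    TangentSeg (OnEllipse (a * r / (a + b)) (b * s / (a + b)))
      (a, 0) (a ^ 2 / (a + b), b * s / (a + b)) := by
  have hab : 0 < a + b := by positivity
  refine tangentSeg_onEllipse (by positivity) (by positivity) ?_
    ⟨by positivity, (div_le_one hab).mpr (by linarith)⟩ (t := b / (a + b)) ?_ ?_
  · intro h
    have h₁ := congrArg Prod.fst h
    field_simp at h₁
    nlinarith
  · simp only [OnEllipse, linePt]
    field_simp
    linear_combination b ^ 2 * s ^ 2 * (b ^ 2 - (a + b) ^ 2) * hr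
  · simp only [linePt]
    field_simp
    linear_combination b ^ 3 * s ^ 2 * hr

lemma caustic_tangentSeg_top :
    TangentSeg (OnEllipse (a * r / (a + b)) (b * s / (a + b)))
      (a ^ 2 / (a + b), b * s / (a + b)) (-(a ^ 2 / (a + b)), b * s / (a + b)) := by
  refine tangentSeg_onEllipse (by positivity) (by positivity) ?_
    ⟨by norm_num, by norm_num⟩ (t := 1 / 2) ?_ ?_
  · intro h
    have h₁ := congrArg Prod.fst h
    have : 0 < a ^ 2 / (a + b) := by positivity
    simp only at h₁
    linarith
  · simp only [OnEllipse, linePt]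
    field_simp
    ring
  · simp only [linePt]
    ring

end Hexagon

/-- The axis-symmetric simple billiard 6-periodic: its vertices lie on the
ellipse, its sides are tangent to the confocal caustic with semi-axes
`a'' = a√(a(a+2b))/(a+b)`, `b'' = b√(b(2a+b))/(a+b)`, and its perimeter equals
`4(a² + ab + b²)/(a + b)`. -/
theorem simple_6periodic (a b : ℝ) (hab : a > b) (hb : b > 0) :
    let P1 : ℝ × ℝ := (a, 0)
    let P2 : ℝ × ℝ := (a^2/(a + b), b*Real.sqrt (b*(2*a + b))/(a + b))
    let P3 : ℝ × ℝ := (-(a^2/(a + b)), b*Real.sqrt (b*(2*a + b))/(a + b))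
    let P4 : ℝ × ℝ := (-a, 0)
    let P5 : ℝ × ℝ := (-P2.1, -P2.2)
    let P6 : ℝ × ℝ := (-P3.1, -P3.2)
    let a'' := a*Real.sqrt (a*(a + 2*b))/(a + b)
    let b'' := b*Real.sqrt (b*(2*a + b))/(a + b)
    let onE : ℝ × ℝ → Prop := fun p => (p.1/a)^2 + (p.2/b)^2 = 1
    let onCaustic : ℝ × ℝ → Prop := fun p => (p.1/a'')^2 + (p.2/b'')^2 = 1
    (onE P1 ∧ onE P2 ∧ onE P3 ∧ onE P4 ∧ onE P5 ∧ onE P6) ∧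
    (TangentSeg onCaustic P1 P2 ∧ TangentSeg onCaustic P2 P3 ∧
     TangentSeg onCaustic P3 P4 ∧ TangentSeg onCaustic P4 P5 ∧
     TangentSeg onCaustic P5 P6 ∧ TangentSeg onCaustic P6 P1) ∧
    edist' P1 P2 + edist' P2 P3 + edist' P3 P4 + edist' P4 P5 +
      edist' P5 P6 + edist' P6 P1 = 4*(a^2 + a*b + b^2)/(a + b) := by
  have ha : 0 < a := hb.trans hab
  have hr : √(a * (a + 2 * b)) ^ 2 = a * (a + 2 * b) := Real.sq_sqrt (by positivity)
  have hs : √(b * (2 * a + b)) ^ 2 = b * (2 * a + b) := Real.sq_sqrt (by positivity)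
  have hr₀ : 0 < √(a * (a + 2 * b)) := Real.sqrt_pos.mpr (by positivity)
  have hs₀ : 0 < √(b * (2 * a + b)) := Real.sqrt_pos.mpr (by positivity)
  simp only [neg_neg]
  refine ⟨onEllipse_symmHexagon ha.ne' (onEllipse_vertex ha hb hs),
    TangentSeg.symmHexagon (fun _ _ => onEllipse_congr)
      (caustic_tangentSeg_right ha hb hr₀ hs₀ hr) (caustic_tangentSeg_top ha hb hr₀ hs₀), ?_⟩
  rw [perimeter_symmHexagon, edist'_vertex ha hb hs, abs_of_pos (by positivity)]
  field_simp
  ring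
end

section
/- Let a > 2b > 0. Define P₁ = (0, b), P₄ = (0, −b), P₂ = (a√(a(a−2b))/(b−a), b²/(b−a)), P₅ = −P₂, P₃ = (a√(a(a−2b))/(b−a), −b²/(b−a)), P₆ = −P₃. Then each Pᵢ lies on the ellipse x²/a² + y²/b² = 1 and the perimeter of the closed polygon P₁P₂P₃P₄P₅P₆ equals 4(a² − ab + b²)/(a − b). -/
open Real

lemma edist'_eq_of_sq_eq {p q : ℝ × ℝ} {d : ℝ} (hd : 0 ≤ d)
    (h : (p.1 - q.1) ^ 2 + (p.2 - q.2) ^ 2 = d ^ 2) : edist' p q = d := by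
  rw [edist', h, sqrt_sq hd]

lemma edist'_vertical (x y : ℝ) : edist' (x, y) (x, -y) = 2 * |y| := by
  rw [edist', ← abs_two, ← abs_mul, ← sqrt_sq_eq_abs]
  congr 1
  ring

lemma perimeter_biaxial_hexagon (b x y : ℝ) :
    edist' (0, b) (x, y) + edist' (x, y) (x, -y) + edist' (x, -y) (0, -b) +
      edist' (0, -b) (-x, -y) + edist' (-x, -y) (-x, y) + edist' (-x, y) (0, b) =
      4 * edist' (0, b) (x, y) + 4 * |y| := by
  have side_eq (p q : ℝ × ℝ) (h : (p.1 - q.1) ^ 2 + (p.2 - q.2) ^ 2 = x ^ 2 + (b - y) ^ 2) :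
      edist' p q = edist' (0, b) (x, y) := by
    rw [edist', h]
    congr 1
    ring
  have h34 := side_eq (x, -y) (0, -b) (by ring)
  have h45 := side_eq (0, -b) (-x, -y) (by ring)
  have h61 := side_eq (-x, y) (0, b) (by ring)
  have h56 : edist' (-x, -y) (-x, y) = 2 * |y| := by
    simpa only [neg_neg, abs_neg] using edist'_vertical (-x) (-y)
  rw [edist'_vertical, h34, h45, h56, h61]
  ring

section Vertex

variable {a b s : ℝ} (hs : s ^ 2 = a * (a - 2 * b)) (hba : b - a ≠ 0)
include hs hba

lemma vertex_on_ellipse (ha : a ≠ 0) :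
    (a * s / (b - a) / a) ^ 2 + (b ^ 2 / (b - a) / b) ^ 2 = 1 := by
  field_simp
  linear_combination hs

lemma edist'_top_vertex (ha : 0 ≤ a) :
    edist' (0, b) (a * s / (b - a), b ^ 2 / (b - a)) = a := by
  refine edist'_eq_of_sq_eq ha ?_
  field_simp
  linear_combination a ^ 2 * hs

end Vertex

/-- The type-I self-intersected billiard 6-periodic: its vertices lie on the
ellipse and its perimeter equals `4(a² − ab + b²)/(a − b)`. -/
theorem type1_6periodic (a b : ℝ) (hab : a > 2*b) (hb : b > 0) :
    let P1 : ℝ × ℝ := (0, b)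
    let P4 : ℝ × ℝ := (0, -b)
    let P2 : ℝ × ℝ := (a*Real.sqrt (a*(a - 2*b))/(b - a), b^2/(b - a))
    let P5 : ℝ × ℝ := (-P2.1, -P2.2)
    let P3 : ℝ × ℝ := (a*Real.sqrt (a*(a - 2*b))/(b - a), -(b^2/(b - a)))
    let P6 : ℝ × ℝ := (-P3.1, -P3.2)
    let onE : ℝ × ℝ → Prop := fun p => (p.1/a)^2 + (p.2/b)^2 = 1
    (onE P1 ∧ onE P2 ∧ onE P3 ∧ onE P4 ∧ onE P5 ∧ onE P6) ∧
    edist' P1 P2 + edist' P2 P3 + edist' P3 P4 + edist' P4 P5 +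
      edist' P5 P6 + edist' P6 P1 = 4*(a^2 - a*b + b^2)/(a - b) := by
  intro P1 P4 P2 P5 P3 P6 onE
  have ha : 0 < a := by linarith
  have hba : b - a < 0 := by linarith
  have hs : √(a * (a - 2 * b)) ^ 2 = a * (a - 2 * b) := sq_sqrt (by nlinarith)
  have hP2 := vertex_on_ellipse hs hba.ne ha.ne'
  refine ⟨?_, ?_⟩
  · simp only [onE, P1, P2, P3, P4, P5, P6, neg_div, neg_sq, zero_div, div_self hb.ne']
    norm_num [hP2]
  · simp only [P1, P2, P3, P4, P5, P6, neg_neg]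
    rw [perimeter_biaxial_hexagon, edist'_top_vertex hs hba.ne ha.le,
      abs_of_neg (div_neg_of_pos_of_neg (by positivity) hba), ← div_neg, neg_sub]
    have hab' : a - b ≠ 0 := by linarith
    field_simp
end

section
/- Let a > b > 0 with 3a² > 4b², and c = √(a² − b²) with 2c > a. Define P₁ = (0, b), P₄ = (0, −b), P₂ = (−a^{3/2}√(2c − a)/c, (c − a)b/c), P₃ = −P₂, P₅ = (−a^{3/2}√(2c − a)/c, −(c − a)b/c), P₆ = −P₅. Then each Pᵢ lies on the ellipse x²/a² + y²/b² = 1 and the perimeter of the closed polygon P₁P₂P₃P₄P₅P₆ equals 4(a + c)√(2a/c − 1). -/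
lemma Real.rpow_three_halves_sq {a : ℝ} (ha : 0 ≤ a) : (a ^ (3 / 2 : ℝ)) ^ 2 = a ^ 3 := by
  rw [← Real.rpow_mul_natCast ha]
  norm_num

lemma edist'_eq_mul_sqrt {x₁ y₁ x₂ y₂ r s : ℝ} (hr : 0 ≤ r)
    (h : (x₁ - x₂) ^ 2 + (y₁ - y₂) ^ 2 = r ^ 2 * s) :
    edist' (x₁, y₁) (x₂, y₂) = r * Real.sqrt s := by
  rw [edist', h, Real.sqrt_mul (sq_nonneg r), Real.sqrt_sq hr]

section Type2Vertex

variable {a b c X : ℝ} (hX : X ^ 2 = a ^ 3 * (2 * c - a) / c ^ 2)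
include hX

lemma type2Vertex_onEllipse (hb : b ≠ 0) (hc : c ≠ 0) :
    (X / a) ^ 2 + ((c - a) * b / c / b) ^ 2 = 1 := by
  rw [div_pow, hX]
  field_simp
  ring

variable (hc2 : c ^ 2 = a ^ 2 - b ^ 2)
include hc2

lemma type2Side_sq (hc : c ≠ 0) :
    X ^ 2 + (b - (c - a) * b / c) ^ 2 = a ^ 2 * (2 * a / c - 1) := by
  rw [hX]
  field_simp
  linear_combination a ^ 2 * hc2

lemma type2Diagonal_sq (hc : c ≠ 0) :
    X ^ 2 + ((c - a) * b / c) ^ 2 = c ^ 2 * (2 * a / c - 1) := by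
  rw [hX]
  field_simp
  linear_combination (c - a) ^ 2 * hc2

end Type2Vertex

theorem type2_6periodic_general (a b c : ℝ) (hab : a > b) (hb : b > 0)
    (hc : c = Real.sqrt (a^2 - b^2)) (hca : 2*c > a) :
    let P1 : ℝ × ℝ := (0, b)
    let P4 : ℝ × ℝ := (0, -b)
    let P2 : ℝ × ℝ := (-(a^(3/2 : ℝ) * Real.sqrt (2*c - a)/c), (c - a)*b/c)
    let P3 : ℝ × ℝ := (-P2.1, -P2.2)
    let P5 : ℝ × ℝ := (-(a^(3/2 : ℝ) * Real.sqrt (2*c - a)/c), -((c - a)*b/c))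
    let P6 : ℝ × ℝ := (-P5.1, -P5.2)
    let onE : ℝ × ℝ → Prop := fun p => (p.1/a)^2 + (p.2/b)^2 = 1
    (onE P1 ∧ onE P2 ∧ onE P3 ∧ onE P4 ∧ onE P5 ∧ onE P6) ∧
    edist' P1 P2 + edist' P2 P3 + edist' P3 P4 + edist' P4 P5 +
      edist' P5 P6 + edist' P6 P1 = 4*(a + c)*Real.sqrt (2*a/c - 1) := by
  have ha : 0 < a := hb.trans hab
  have hab2 : 0 < a ^ 2 - b ^ 2 := by nlinarith
  have hc0 : 0 < c := hc ▸ Real.sqrt_pos.mpr hab2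
  have hc2 : c ^ 2 = a ^ 2 - b ^ 2 := hc ▸ Real.sq_sqrt hab2.le
  dsimp only
  set X := a ^ (3 / 2 : ℝ) * Real.sqrt (2 * c - a) / c
  have hX : X ^ 2 = a ^ 3 * (2 * c - a) / c ^ 2 := by
    rw [div_pow, mul_pow, Real.rpow_three_halves_sq ha.le, Real.sq_sqrt (by linarith)]
  have hXY := type2Vertex_onEllipse hX hb.ne' hc0.ne'
  have hside := type2Side_sq hX hc2 hc0.ne'
  have hdiag := type2Diagonal_sq hX hc2 hc0.ne'
  refine ⟨⟨?_, ?_, ?_, ?_, ?_, ?_⟩, ?_⟩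
  · simp [hb.ne']
  · linear_combination hXY
  · linear_combination hXY
  · simp [hb.ne']
  · linear_combination hXY
  · linear_combination hXY
  · have h2c : 0 ≤ 2 * c := by positivity
    rw [edist'_eq_mul_sqrt (s := 2 * a / c - 1) ha.le ?P1P2,
      edist'_eq_mul_sqrt (s := 2 * a / c - 1) h2c ?P2P3,
      edist'_eq_mul_sqrt (s := 2 * a / c - 1) ha.le ?P3P4,
      edist'_eq_mul_sqrt (s := 2 * a / c - 1) ha.le ?P4P5,
      edist'_eq_mul_sqrt (s := 2 * a / c - 1) h2c ?P5P6,
      edist'_eq_mul_sqrt (s := 2 * a / c - 1) ha.le ?P6P1]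
    · ring
    case P1P2 | P3P4 | P4P5 | P6P1 => linear_combination hside
    case P2P3 | P5P6 => linear_combination 4 * hdiag

/-- The type-II self-intersected billiard 6-periodic: its vertices lie on the
ellipse and its perimeter equals `4(a + c)√(2a/c − 1)`. -/
theorem type2_6periodic (a b c : ℝ) (hab : a > b) (hb : b > 0)
    (hex : 3*a^2 > 4*b^2) (hc : c = Real.sqrt (a^2 - b^2)) (hca : 2*c > a) :
    let P1 : ℝ × ℝ := (0, b)
    let P4 : ℝ × ℝ := (0, -b)
    let P2 : ℝ × ℝ := (-(a^(3/2 : ℝ) * Real.sqrt (2*c - a)/c), (c - a)*b/c)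
    let P3 : ℝ × ℝ := (-P2.1, -P2.2)
    let P5 : ℝ × ℝ := (-(a^(3/2 : ℝ) * Real.sqrt (2*c - a)/c), -((c - a)*b/c))
    let P6 : ℝ × ℝ := (-P5.1, -P5.2)
    let onE : ℝ × ℝ → Prop := fun p => (p.1/a)^2 + (p.2/b)^2 = 1
    (onE P1 ∧ onE P2 ∧ onE P3 ∧ onE P4 ∧ onE P5 ∧ onE P6) ∧
    edist' P1 P2 + edist' P2 P3 + edist' P3 P4 + edist' P4 P5 +
      edist' P5 P6 + edist' P6 P1 = 4*(a + c)*Real.sqrt (2*a/c - 1) :=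
  type2_6periodic_general a b c hab hb hc hca
end
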